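/- arXiv:2501.06616 — 6 statements merged into one kernel-verified Lean document; each statement's English description precedes it below -/
import Mathlib

section
/- For every complex number s with 0 < |s| < 1 and every nonzero complex number t, one has the Jacobi triple product identity ∏_{n=1}^∞ (1 − s^{2n})(1 + t·s^{2n−1})(1 + t⁻¹·s^{2n−1}) = Σ_{k∈ℤ} t^k · s^{k²}, where the infinite product converges and the series on the right converges absolutely. -/
/-!
Cut the product off at `N` factors. Pulling `t⁻¹ s^(2n+1)` out of each factor `1 + t⁻¹ s^(2n+1)`
merges the two odd products into `∏_{i<2N} (1 + u qⁱ)` with `q = s²` and `u = t s^(1-2N)`, which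
the q-binomial theorem expands; the result is the finite identity
`∏_{n<N} (…) = ∑_{|m|≤N} (q;q)_N [2N, N+m]_q tᵐ s^(m²)`.
For `|q| < 1` every Pochhammer symbol `(q;q)_n` is bounded and bounded away from `0`, so the
coefficients `(q;q)_N [2N, N+m]_q` are bounded uniformly in `N` and `m`, and each tends to
`(q;q)_∞ · (q;q)_∞ / (q;q)_∞² = 1`. Tannery's theorem then lets `N → ∞` under the sum over `m`.
-/

open Finset Filter Topology

section Algebra

variable {R : Type*} [CommRing R]

def qPochhammer (q : R) (n : ℕ) : R := ∏ j ∈ range n, (1 - q ^ (j + 1))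

def qBinomial (q : R) : ℕ → ℕ → R
  | _, 0 => 1
  | 0, _ + 1 => 0
  | n + 1, k + 1 => qBinomial q n k + q ^ (k + 1) * qBinomial q n (k + 1)

variable (q : R)

@[simp] lemma qPochhammer_zero : qPochhammer q 0 = 1 := prod_range_zero _

lemma qPochhammer_succ (n : ℕ) : qPochhammer q (n + 1) = qPochhammer q n * (1 - q ^ (n + 1)) :=
  prod_range_succ _ _

@[simp] lemma qBinomial_zero_right (n : ℕ) : qBinomial q n 0 = 1 := by cases n <;> rfl

lemma qBinomial_succ_succ (n k : ℕ) :
    qBinomial q (n + 1) (k + 1) = qBinomial q n k + q ^ (k + 1) * qBinomial q n (k + 1) := rfl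

lemma qBinomial_of_lt {n k : ℕ} (h : n < k) : qBinomial q n k = 0 := by
  induction n generalizing k with
  | zero => obtain ⟨k, rfl⟩ := Nat.exists_eq_add_one_of_ne_zero (by omega : k ≠ 0); rfl
  | succ n ih =>
    obtain ⟨k, rfl⟩ := Nat.exists_eq_add_one_of_ne_zero (by omega : k ≠ 0)
    rw [qBinomial_succ_succ, ih (by omega), ih (by omega), mul_zero, add_zero]

@[simp] lemma qBinomial_self (n : ℕ) : qBinomial q n n = 1 := by
  induction n with
  | zero => rfl
  | succ n ih => rw [qBinomial_succ_succ, ih, qBinomial_of_lt q n.lt_succ_self, mul_zero, add_zero]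

lemma qBinomial_add_mul_qPochhammer (m n : ℕ) :
    qBinomial q (m + n) m * qPochhammer q m * qPochhammer q n = qPochhammer q (m + n) := by
  induction m generalizing n with
  | zero => simp
  | succ m ihm =>
    induction n with
    | zero => simp
    | succ n ihn =>
      have h := ihm (n + 1)
      rw [show m + (n + 1) = m + 1 + n by omega, qPochhammer_succ q n] at h
      rw [qPochhammer_succ q m] at ihn
      rw [show m + 1 + (n + 1) = m + 1 + n + 1 by omega, qBinomial_succ_succ, qPochhammer_succ q m,
        qPochhammer_succ q n, qPochhammer_succ q (m + 1 + n)]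
      linear_combination (1 - q ^ (m + 1)) * h + q ^ (m + 1) * (1 - q ^ (n + 1)) * ihn

lemma prod_one_add_mul_pow_eq_sum_qBinomial (n : ℕ) (u : R) :
    ∏ i ∈ range n, (1 + u * q ^ i) =
      ∑ k ∈ range (n + 1), qBinomial q n k * q ^ k.choose 2 * u ^ k := by
  induction n generalizing u with
  | zero => simp
  | succ n ih =>
    set c : ℕ → R := fun k => qBinomial q n k * q ^ (k.choose 2 + k) * u ^ k
    have hc : ∀ k, qBinomial q (n + 1) (k + 1) * q ^ (k + 1).choose 2 * u ^ (k + 1) =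
        c (k + 1) + c k * u := fun k => by
      simp only [c, qBinomial_succ_succ, Nat.choose_succ_succ', Nat.choose_one_right]
      ring
    have hshift : ∏ i ∈ range n, (1 + u * q ^ (i + 1)) = ∑ k ∈ range (n + 1), c k := by
      rw [prod_congr rfl fun i _ => show 1 + u * q ^ (i + 1) = 1 + u * q * q ^ i by ring, ih]
      exact sum_congr rfl fun k _ => by ring
    have hc0 : c 0 = 1 := by simp [c]
    have hcn : c (n + 1) = 0 := by simp [c, qBinomial_of_lt q n.lt_succ_self]
    rw [prod_range_succ', hshift, sum_range_succ' _ (n + 1), sum_congr rfl fun k _ => hc k,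
      sum_add_distrib, ← sum_mul, sum_range_succ (fun k => c (k + 1)), sum_range_succ' c, hc0, hcn]
    simp only [qBinomial_zero_right, Nat.choose_zero_succ, pow_zero, mul_one, add_zero]
    ring

end Algebra

section Field

variable {K : Type*} [Field K] {s t : K}

lemma prod_one_add_mul_pow_mul_one_add_inv_mul_pow (hs : s ≠ 0) (ht : t ≠ 0) (N : ℕ) :
    ∏ n ∈ range N, ((1 + t * s ^ (2 * n + 1)) * (1 + t⁻¹ * s ^ (2 * n + 1))) =
      t⁻¹ ^ N * s ^ (N ^ 2) * ∏ i ∈ range (2 * N), (1 + t * s / s ^ (2 * N) * (s ^ 2) ^ i) := by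
  induction N with
  | zero => simp
  | succ N ih =>
    have hshift : ∀ i ∈ range (2 * N),
        1 + t * s / s ^ (2 * (N + 1)) * (s ^ 2) ^ (i + 1) = 1 + t * s / s ^ (2 * N) * (s ^ 2) ^ i :=
      fun i _ => by field_simp; ring
    rw [prod_range_succ, ih, show 2 * (N + 1) = 2 * N + 1 + 1 by ring, prod_range_succ,
      prod_range_succ', ← show 2 * (N + 1) = 2 * N + 1 + 1 by ring, prod_congr rfl hshift]
    generalize ∏ i ∈ range (2 * N), (1 + t * s / s ^ (2 * N) * (s ^ 2) ^ i) = P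
    simp only [inv_pow]
    field_simp
    ring

lemma inv_pow_mul_pow_sq_mul_pow_choose_two (hs : s ≠ 0) (ht : t ≠ 0) (N k : ℕ) :
    t⁻¹ ^ N * s ^ (N ^ 2) * ((s ^ 2) ^ k.choose 2 * (t * s / s ^ (2 * N)) ^ k) =
      t ^ ((k : ℤ) - N) * s ^ (((k : ℤ) - N) ^ 2) := by
  have hk : k.choose 2 * 2 + k = k ^ 2 := by
    rw [Nat.choose_two_right, Nat.div_mul_cancel (Nat.even_mul_pred_self k).two_dvd]
    cases k with
    | zero => rfl
    | succ k => rw [Nat.add_sub_cancel]; ring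
  rw [show ((k : ℤ) - N) ^ 2 = ((k ^ 2 + N ^ 2 : ℕ) : ℤ) - ((2 * N * k : ℕ) : ℤ) by push_cast; ring,
    zpow_sub₀ hs, zpow_sub₀ ht, zpow_natCast, zpow_natCast, zpow_natCast, zpow_natCast, ← hk,
    div_pow, mul_pow, inv_pow, ← pow_mul, ← pow_mul]
  field_simp
  ring

theorem prod_range_jacobi_factor_eq_sum (hs : s ≠ 0) (ht : t ≠ 0) (N : ℕ) :
    ∏ n ∈ range N,
        ((1 - s ^ (2 * n + 2)) * (1 + t * s ^ (2 * n + 1)) * (1 + t⁻¹ * s ^ (2 * n + 1))) =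
      ∑ k ∈ range (2 * N + 1), qPochhammer (s ^ 2) N * qBinomial (s ^ 2) (2 * N) k *
        (t ^ ((k : ℤ) - N) * s ^ (((k : ℤ) - N) ^ 2)) := by
  have hP : ∏ n ∈ range N, (1 - s ^ (2 * n + 2)) = qPochhammer (s ^ 2) N :=
    prod_congr rfl fun n _ => by ring
  simp only [mul_assoc, prod_mul_distrib, hP, prod_one_add_mul_pow_mul_one_add_inv_mul_pow hs ht,
    prod_one_add_mul_pow_eq_sum_qBinomial, mul_sum]
  refine sum_congr rfl fun k _ => ?_
  rw [← inv_pow_mul_pow_sq_mul_pow_choose_two hs ht]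
  ring

end Field

section Analytic

variable {q : ℂ}

lemma one_sub_pow_succ_ne_zero (hq : ‖q‖ < 1) (j : ℕ) : 1 - q ^ (j + 1) ≠ 0 := by
  have : ‖q ^ (j + 1)‖ < 1 := by rw [norm_pow]; exact pow_lt_one₀ (norm_nonneg q) hq j.succ_ne_zero
  exact sub_ne_zero.mpr fun h => by simp [← h] at this

lemma qPochhammer_ne_zero (hq : ‖q‖ < 1) (n : ℕ) : qPochhammer q n ≠ 0 :=
  prod_ne_zero_iff.mpr fun j _ => one_sub_pow_succ_ne_zero hq j

lemma summable_norm_neg_pow_succ (hq : ‖q‖ < 1) : Summable fun j : ℕ => ‖-q ^ (j + 1)‖ := by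
  simpa [pow_succ] using (summable_geometric_of_lt_one (norm_nonneg q) hq).mul_right ‖q‖

lemma tprod_one_sub_pow_succ_ne_zero (hq : ‖q‖ < 1) : ∏' j : ℕ, (1 - q ^ (j + 1)) ≠ 0 := by
  simpa only [sub_eq_add_neg] using tprod_one_add_ne_zero_of_summable
    (fun j => by simpa only [← sub_eq_add_neg] using one_sub_pow_succ_ne_zero hq j)
    (summable_norm_neg_pow_succ hq)

lemma tendsto_qPochhammer (hq : ‖q‖ < 1) :
    Tendsto (qPochhammer q) atTop (𝓝 (∏' j : ℕ, (1 - q ^ (j + 1)))) := by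
  simp only [sub_eq_add_neg]
  exact (multipliable_one_add_of_summable (summable_norm_neg_pow_succ hq)).hasProd.tendsto_prod_nat

lemma qBinomial_add_eq_div (hq : ‖q‖ < 1) (m n : ℕ) :
    qBinomial q (m + n) m = qPochhammer q (m + n) / (qPochhammer q m * qPochhammer q n) := by
  rw [← qBinomial_add_mul_qPochhammer, mul_assoc,
    mul_div_cancel_right₀ _ (mul_ne_zero (qPochhammer_ne_zero hq m) (qPochhammer_ne_zero hq n))]

lemma exists_norm_qBinomial_le (hq : ‖q‖ < 1) : ∃ C, ∀ n k, ‖qBinomial q n k‖ ≤ C := by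
  have hlim := tendsto_qPochhammer hq
  obtain ⟨A, hA⟩ := hlim.norm.bddAbove_range
  obtain ⟨B, hB⟩ := (hlim.inv₀ (tprod_one_sub_pow_succ_ne_zero hq)).norm.bddAbove_range
  have hA' : ∀ n, ‖qPochhammer q n‖ ≤ A := fun n => hA ⟨n, rfl⟩
  have hB' : ∀ n, ‖(qPochhammer q n)⁻¹‖ ≤ B := fun n => hB ⟨n, rfl⟩
  have hA0 : 0 ≤ A := (norm_nonneg _).trans (hA' 0)
  have hB0 : 0 ≤ B := (norm_nonneg _).trans (hB' 0)
  refine ⟨A * (B * B), fun n k => ?_⟩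
  rcases le_or_gt k n with hkn | hnk
  · obtain ⟨m, rfl⟩ := Nat.exists_eq_add_of_le hkn
    rw [qBinomial_add_eq_div hq, div_eq_mul_inv, mul_inv, norm_mul, norm_mul]
    exact mul_le_mul (hA' _) (mul_le_mul (hB' _) (hB' _) (norm_nonneg _) hB0) (by positivity) hA0
  · rw [qBinomial_of_lt q hnk, norm_zero]
    positivity

lemma tendsto_qBinomial_add (hq : ‖q‖ < 1) {a b : ℕ → ℕ} (ha : Tendsto a atTop atTop)
    (hb : Tendsto b atTop atTop) :
    Tendsto (fun N => qBinomial q (a N + b N) (a N)) atTop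
      (𝓝 (∏' j : ℕ, (1 - q ^ (j + 1)))⁻¹) := by
  have hP := tprod_one_sub_pow_succ_ne_zero hq
  have hlim := tendsto_qPochhammer hq
  have h := (hlim.comp (ha.atTop_add_atTop hb)).div ((hlim.comp ha).mul (hlim.comp hb))
    (mul_ne_zero hP hP)
  rw [div_mul_cancel_left₀ hP] at h
  simp only [qBinomial_add_eq_div hq]
  exact h

end Analytic

section Jacobi

variable {s t : ℂ}

lemma summable_norm_pow_mul_pow_sq (hs : ‖s‖ < 1) (w : ℂ) :
    Summable fun n : ℕ => ‖w ^ n * s ^ (n ^ 2)‖ := by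
  have hsmall : ∀ᶠ n : ℕ in atTop, ‖w‖ * ‖s‖ ^ n ≤ 1 / 2 := by
    have h := (tendsto_pow_atTop_nhds_zero_of_lt_one (norm_nonneg s) hs).const_mul ‖w‖
    rw [mul_zero] at h
    exact h.eventually (eventually_le_nhds (by norm_num))
  refine summable_geometric_two.of_norm_bounded_eventually ?_
  rw [Nat.cofinite_eq_atTop]
  filter_upwards [hsmall] with n hn
  rw [norm_norm, norm_mul, norm_pow, norm_pow, sq, pow_mul, ← mul_pow]
  exact pow_le_pow_left₀ (by positivity) hn n

lemma summable_norm_zpow_mul_zpow_sq (hs : ‖s‖ < 1) (t : ℂ) :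
    Summable fun k : ℤ => ‖t ^ k * s ^ (k ^ 2)‖ := by
  refine Summable.of_nat_of_neg ?_ ?_
  · simpa only [zpow_natCast, ← Nat.cast_pow] using summable_norm_pow_mul_pow_sq hs t
  · simpa only [zpow_neg, zpow_natCast, neg_sq, ← Nat.cast_pow, inv_pow] using
      summable_norm_pow_mul_pow_sq hs t⁻¹

lemma multipliable_one_add_mul_pow_two_mul_add (hs : ‖s‖ < 1) (c : ℂ) (j : ℕ) :
    Multipliable fun n : ℕ => 1 + c * s ^ (2 * n + j) := by
  refine multipliable_one_add_of_summable ?_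
  have hs2 : ‖s‖ ^ 2 < 1 := pow_lt_one₀ (norm_nonneg s) hs two_ne_zero
  refine ((summable_geometric_of_lt_one (by positivity) hs2).mul_left (‖c‖ * ‖s‖ ^ j)).congr
    fun n => ?_
  rw [norm_mul, norm_pow, pow_add, pow_mul]
  ring

lemma multipliable_jacobi_factor (hs : ‖s‖ < 1) (t : ℂ) :
    Multipliable fun n : ℕ =>
      (1 - s ^ (2 * n + 2)) * (1 + t * s ^ (2 * n + 1)) * (1 + t⁻¹ * s ^ (2 * n + 1)) := by
  refine (((multipliable_one_add_mul_pow_two_mul_add hs (-1) 2).mul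
    (multipliable_one_add_mul_pow_two_mul_add hs t 1)).mul
    (multipliable_one_add_mul_pow_two_mul_add hs t⁻¹ 1)).congr fun n => ?_
  ring

noncomputable def jacobiPartialTerm (s t : ℂ) (N : ℕ) (m : ℤ) : ℂ :=
  if m.natAbs ≤ N then
    qPochhammer (s ^ 2) N * qBinomial (s ^ 2) (2 * N) (m + N).toNat * (t ^ m * s ^ (m ^ 2))
  else 0

lemma tsum_jacobiPartialTerm (hs : s ≠ 0) (ht : t ≠ 0) (N : ℕ) :
    ∑' m : ℤ, jacobiPartialTerm s t N m = ∏ n ∈ range N,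
      ((1 - s ^ (2 * n + 2)) * (1 + t * s ^ (2 * n + 1)) * (1 + t⁻¹ * s ^ (2 * n + 1))) := by
  have hinj : Set.InjOn (fun k : ℕ => (k : ℤ) - N) (range (2 * N + 1)) := fun a _ b _ h => by
    simpa using h
  rw [prod_range_jacobi_factor_eq_sum hs ht,
    tsum_eq_sum (s := (range (2 * N + 1)).image fun k : ℕ => (k : ℤ) - N), sum_image hinj]
  · refine sum_congr rfl fun k hk => ?_
    rw [mem_range] at hk
    rw [jacobiPartialTerm, if_pos (by omega), show ((k : ℤ) - N + N).toNat = k by omega]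
  · intro m hm
    refine if_neg fun habs => hm (mem_image.mpr ⟨(m + N).toNat, ?_, by omega⟩)
    rw [mem_range]
    omega

lemma exists_norm_jacobiPartialTerm_le (hs : ‖s‖ < 1) (t : ℂ) :
    ∃ C, ∀ N m, ‖jacobiPartialTerm s t N m‖ ≤ C * ‖t ^ m * s ^ (m ^ 2)‖ := by
  have hq : ‖s ^ 2‖ < 1 := by rw [norm_pow]; exact pow_lt_one₀ (norm_nonneg s) hs two_ne_zero
  obtain ⟨A, hA⟩ := (tendsto_qPochhammer hq).norm.bddAbove_range
  obtain ⟨B, hB⟩ := exists_norm_qBinomial_le hq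
  have hA0 : 0 ≤ A := (norm_nonneg _).trans (hA ⟨0, rfl⟩)
  have hB0 : 0 ≤ B := (norm_nonneg _).trans (hB 0 0)
  refine ⟨A * B, fun N m => ?_⟩
  unfold jacobiPartialTerm
  split_ifs
  · rw [norm_mul, norm_mul]
    exact mul_le_mul_of_nonneg_right (mul_le_mul (hA ⟨N, rfl⟩) (hB _ _) (norm_nonneg _) hA0)
      (norm_nonneg _)
  · rw [norm_zero]
    positivity

lemma tendsto_jacobiPartialTerm (hs : ‖s‖ < 1) (t : ℂ) (m : ℤ) :
    Tendsto (fun N => jacobiPartialTerm s t N m) atTop (𝓝 (t ^ m * s ^ (m ^ 2))) := by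
  have hq : ‖s ^ 2‖ < 1 := by rw [norm_pow]; exact pow_lt_one₀ (norm_nonneg s) hs two_ne_zero
  have hshift (a : ℤ) : Tendsto (fun N : ℕ => (a + N).toNat) atTop atTop :=
    tendsto_atTop.mpr fun b => eventually_atTop.mpr ⟨b + a.natAbs, fun n hn => by omega⟩
  have h := ((tendsto_qPochhammer hq).mul
    (tendsto_qBinomial_add hq (hshift m) (hshift (-m)))).mul_const (t ^ m * s ^ (m ^ 2))
  rw [mul_inv_cancel₀ (tprod_one_sub_pow_succ_ne_zero hq), one_mul] at h
  refine h.congr' ?_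
  filter_upwards [eventually_ge_atTop m.natAbs] with N hN
  rw [jacobiPartialTerm, if_pos hN, show 2 * N = (m + N).toNat + (-m + N).toNat by omega]

end Jacobi

/-- **Jacobi triple product identity.** For `0 < |s| < 1` and `t ≠ 0`,
`∏_{n≥1} (1 - s^{2n})(1 + t s^{2n-1})(1 + t⁻¹ s^{2n-1}) = ∑_{k∈ℤ} t^k s^{k²}`,
the infinite product being convergent and the series absolutely convergent. -/
theorem jacobi_triple_product (s t : ℂ) (hs0 : 0 < ‖s‖) (hs1 : ‖s‖ < 1) (ht : t ≠ 0) :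
    Multipliable (fun n : ℕ =>
      (1 - s ^ (2 * n + 2)) * (1 + t * s ^ (2 * n + 1)) * (1 + t⁻¹ * s ^ (2 * n + 1))) ∧
    Summable (fun k : ℤ => ‖t ^ k * s ^ (k ^ 2)‖) ∧
    (∏' n : ℕ,
      (1 - s ^ (2 * n + 2)) * (1 + t * s ^ (2 * n + 1)) * (1 + t⁻¹ * s ^ (2 * n + 1))) =
      ∑' k : ℤ, t ^ k * s ^ (k ^ 2) := by
  have hmult := multipliable_jacobi_factor hs1 t
  have hsum := summable_norm_zpow_mul_zpow_sq hs1 t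
  obtain ⟨C, hC⟩ := exists_norm_jacobiPartialTerm_le hs1 t
  have hlim : Tendsto (fun N => ∑' m, jacobiPartialTerm s t N m) atTop
      (𝓝 (∑' k : ℤ, t ^ k * s ^ (k ^ 2))) :=
    tendsto_tsum_of_dominated_convergence (hsum.mul_left C) (tendsto_jacobiPartialTerm hs1 t)
      (.of_forall hC)
  refine ⟨hmult, hsum, tendsto_nhds_unique hmult.hasProd.tendsto_prod_nat ?_⟩
  simpa only [tsum_jacobiPartialTerm (norm_pos_iff.mp hs0) ht] using hlim
end

section
/- For every complex number s with |s| < 1, one has ∏_{n=1}^∞ (1 − s^{2n})(1 + s^{2n−1})² = Σ_{k∈ℤ} s^{k²}, with the product convergent and the series absolutely convergent. -/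
/-!
Expanding `∏_{j<2N} (1 + q^j z)` by the `q`-binomial theorem at `q = s²`, `z = s^(1-2N)`
and multiplying by `s^(N²)` gives the finite identity
`∏_{i<N} (1 + s^(2i+1))² = ∑_{|m| ≤ N} s^(m²) [2N, N+m]_{s²}`.
After multiplying by `(s²; s²)_N`, the coefficient `[2N, N+m]_q (q; q)_N` is a product of two
tails of `(q; q)_∞`; these are bounded uniformly and tend to `1` as `N → ∞`, so Tannery's theorem
lets `N → ∞` term by term.
-/

open Finset Filter Topology

section QBinomial

variable {R : Type*}

/-- The Gaussian binomial coefficient `[M, k]_q`. -/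
def qBinom [Semiring R] (q : R) : ℕ → ℕ → R
  | _, 0 => 1
  | 0, _ + 1 => 0
  | M + 1, k + 1 => qBinom q M (k + 1) + q ^ (M - k) * qBinom q M k

section Semiring

variable [Semiring R] (q : R)

@[simp]
theorem qBinom_zero_right (M : ℕ) : qBinom q M 0 = 1 := by
  cases M <;> rfl

theorem qBinom_succ_succ (M k : ℕ) :
    qBinom q (M + 1) (k + 1) = qBinom q M (k + 1) + q ^ (M - k) * qBinom q M k := rfl

theorem qBinom_eq_zero_of_lt : ∀ {M k : ℕ}, M < k → qBinom q M k = 0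
  | 0, _ + 1, _ => rfl
  | M + 1, k + 1, h => by
    rw [qBinom_succ_succ, qBinom_eq_zero_of_lt (by omega), qBinom_eq_zero_of_lt (by omega),
      mul_zero, add_zero]

@[simp]
theorem qBinom_self : ∀ M : ℕ, qBinom q M M = 1
  | 0 => rfl
  | M + 1 => by
    rw [qBinom_succ_succ, qBinom_eq_zero_of_lt q M.lt_succ_self, qBinom_self M, Nat.sub_self,
      pow_zero, mul_one, zero_add]

end Semiring

theorem prod_one_add_pow_mul_eq_sum_qBinom [CommSemiring R] (q z : R) (M : ℕ) :
    ∏ j ∈ range M, (1 + q ^ j * z) =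
      ∑ k ∈ range (M + 1), q ^ k.choose 2 * qBinom q M k * z ^ k := by
  induction M with
  | zero => simp
  | succ M ih =>
    have hshift : ∑ k ∈ range (M + 1), q ^ k.choose 2 * qBinom q M k * z ^ k =
        1 + ∑ k ∈ range (M + 1), q ^ (k + 1).choose 2 * qBinom q M (k + 1) * z ^ (k + 1) := by
      rw [sum_range_succ', sum_range_succ
        (fun k => q ^ (k + 1).choose 2 * qBinom q M (k + 1) * z ^ (k + 1)) M,
        qBinom_eq_zero_of_lt q M.lt_succ_self]
      simp [add_comm]
    have hterm : ∀ k ∈ range (M + 1), q ^ k.choose 2 * qBinom q M k * z ^ k * (q ^ M * z) =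
        q ^ (k + 1).choose 2 * (q ^ (M - k) * qBinom q M k) * z ^ (k + 1) := fun k hk => by
      have hexp : (k + 1).choose 2 + (M - k) = k.choose 2 + M := by
        have := mem_range.mp hk
        simp only [Nat.choose_succ_succ' k 1, Nat.choose_one_right, Nat.reduceAdd]
        omega
      rw [show q ^ (k + 1).choose 2 * (q ^ (M - k) * qBinom q M k) =
        q ^ ((k + 1).choose 2 + (M - k)) * qBinom q M k by ring, hexp]
      ring
    rw [prod_range_succ, ih, sum_range_succ' _ (M + 1), mul_add, mul_one, sum_mul, hshift,
      sum_congr rfl hterm]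
    simp only [qBinom_succ_succ, mul_add, add_mul, sum_add_distrib, Nat.choose_zero_succ,
      pow_zero, qBinom_zero_right, mul_one]
    ring

section CommRing

variable [CommRing R] (q : R)

/-- The `q`-Pochhammer symbol `(q; q)_n`. -/
def qPoch (n : ℕ) : R := ∏ j ∈ range n, (1 - q ^ (j + 1))

theorem qPoch_succ (n : ℕ) : qPoch q (n + 1) = qPoch q n * (1 - q ^ (n + 1)) :=
  prod_range_succ _ _

theorem qPoch_mul_prod_Ico {a b : ℕ} (hab : a ≤ b) :
    qPoch q a * ∏ j ∈ Ico a b, (1 - q ^ (j + 1)) = qPoch q b :=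
  prod_range_mul_prod_Ico _ hab

theorem qBinom_mul_qPoch_mul_qPoch :
    ∀ {M k : ℕ}, k ≤ M → qBinom q M k * qPoch q k * qPoch q (M - k) = qPoch q M
  | M, 0, _ => by simp [qPoch]
  | M + 1, k + 1, hk => by
    rcases Nat.lt_or_ge k M with hlt | hge
    · obtain ⟨d, rfl⟩ := Nat.exists_eq_add_of_lt hlt
      have ih₁ := qBinom_mul_qPoch_mul_qPoch (M := k + d + 1) (k := k + 1) (by omega)
      have ih₂ := qBinom_mul_qPoch_mul_qPoch (M := k + d + 1) (k := k) (by omega)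
      rw [show k + d + 1 - (k + 1) = d by omega, qPoch_succ q k] at ih₁
      rw [show k + d + 1 - k = d + 1 by omega, qPoch_succ q d] at ih₂
      rw [show k + d + 1 + 1 - (k + 1) = d + 1 by omega, qBinom_succ_succ,
        show k + d + 1 - k = d + 1 by omega, qPoch_succ q k, qPoch_succ q d,
        qPoch_succ q (k + d + 1)]
      linear_combination (1 - q ^ (d + 1)) * ih₁ + q ^ (d + 1) * (1 - q ^ (k + 1)) * ih₂
    · obtain rfl : k = M := by omega
      simp [qPoch]

variable [IsDomain R] {q}

theorem qBinom_symm (hq : ∀ n, qPoch q n ≠ 0) {M k : ℕ} (hk : k ≤ M) :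
    qBinom q M (M - k) = qBinom q M k := by
  refine mul_right_cancel₀ (mul_ne_zero (hq k) (hq (M - k))) ?_
  have h := qBinom_mul_qPoch_mul_qPoch q (Nat.sub_le M k)
  rw [Nat.sub_sub_self hk] at h
  rw [← mul_assoc, mul_right_comm, h, ← mul_assoc, qBinom_mul_qPoch_mul_qPoch q hk]

theorem qBinom_mul_qPoch_sub_eq_prod_Ico {M k : ℕ} (hq : qPoch q k ≠ 0) (hk : k ≤ M) :
    qBinom q M k * qPoch q (M - k) = ∏ j ∈ Ico k M, (1 - q ^ (j + 1)) := by
  refine mul_left_cancel₀ hq ?_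
  rw [qPoch_mul_prod_Ico q hk, ← qBinom_mul_qPoch_mul_qPoch q hk]
  ring

end CommRing

end QBinomial

section TailProducts

variable {R : Type*} [NormedCommRing R] [NormOneClass R] {q : R}

theorem norm_prod_Ico_one_sub_pow_sub_one_le (hq : ‖q‖ < 1) (a b : ℕ) :
    ‖∏ j ∈ Ico a b, (1 - q ^ (j + 1)) - 1‖ ≤ Real.exp (‖q‖ ^ a / (1 - ‖q‖)) - 1 := by
  have hsum : ∑ j ∈ Ico a b, ‖-q ^ (j + 1)‖ ≤ ‖q‖ ^ a / (1 - ‖q‖) := by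
    refine (sum_le_sum fun j _ => ?_).trans (geom_sum_Ico_le_of_lt_one (norm_nonneg q) hq)
    rw [norm_neg]
    exact (norm_pow_le q _).trans (pow_le_pow_of_le_one (norm_nonneg q) hq.le (by omega))
  simp_rw [sub_eq_add_neg (1 : R)]
  exact (norm_prod_one_add_sub_one_le _ _).trans (by gcongr)

theorem norm_prod_Ico_one_sub_pow_le (hq : ‖q‖ < 1) (a b : ℕ) :
    ‖∏ j ∈ Ico a b, (1 - q ^ (j + 1))‖ ≤ Real.exp (1 - ‖q‖)⁻¹ := by
  have hexp : ‖q‖ ^ a / (1 - ‖q‖) ≤ (1 - ‖q‖)⁻¹ := by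
    rw [div_eq_mul_inv]
    exact mul_le_of_le_one_left (inv_nonneg.2 (by linarith))
      (pow_le_one₀ (norm_nonneg q) hq.le)
  calc ‖∏ j ∈ Ico a b, (1 - q ^ (j + 1))‖
      ≤ ‖∏ j ∈ Ico a b, (1 - q ^ (j + 1)) - 1‖ + ‖(1 : R)‖ := norm_le_norm_sub_add _ _
    _ ≤ Real.exp (1 - ‖q‖)⁻¹ := by
      rw [norm_one]
      linarith [norm_prod_Ico_one_sub_pow_sub_one_le hq a b, Real.exp_le_exp.2 hexp]

theorem tendsto_prod_Ico_one_sub_pow {α : Type*} {l : Filter α} {a b : α → ℕ} (hq : ‖q‖ < 1)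
    (ha : Tendsto a l atTop) :
    Tendsto (fun n => ∏ j ∈ Ico (a n) (b n), (1 - q ^ (j + 1))) l (𝓝 1) := by
  have hbound : Tendsto (fun n => Real.exp (‖q‖ ^ a n / (1 - ‖q‖)) - 1) l (𝓝 0) := by
    have h : Tendsto (fun n => ‖q‖ ^ a n / (1 - ‖q‖)) l (𝓝 0) := by
      simpa using
        ((tendsto_pow_atTop_nhds_zero_of_lt_one (norm_nonneg q) hq).comp ha).div_const (1 - ‖q‖)
    simpa using ((Real.continuous_exp.tendsto 0).comp h).sub_const 1
  rw [tendsto_iff_norm_sub_tendsto_zero]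
  exact squeeze_zero (fun _ => norm_nonneg _)
    (fun n => norm_prod_Ico_one_sub_pow_sub_one_le hq (a n) (b n)) hbound

end TailProducts

section CentralCoefficient

variable {𝕜 : Type*} [NormedField 𝕜] {q : 𝕜}

theorem qPoch_ne_zero (hq : ‖q‖ < 1) (n : ℕ) : qPoch q n ≠ 0 := by
  refine prod_ne_zero_iff.2 fun j _ => sub_ne_zero.2 fun h => ?_
  have : ‖q ^ (j + 1)‖ < 1 := by
    rw [norm_pow]
    exact pow_lt_one₀ (norm_nonneg q) hq (by omega)
  rw [← h, norm_one] at this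
  exact lt_irrefl _ this

theorem qBinom_mul_qPoch_eq_prod_Ico_mul_prod_Ico (hq : ‖q‖ < 1) {N a : ℕ} (ha : a ≤ N) :
    qBinom q (2 * N) (N + a) * qPoch q N =
      (∏ j ∈ Ico (N + a) (2 * N), (1 - q ^ (j + 1))) *
        ∏ j ∈ Ico (N - a) N, (1 - q ^ (j + 1)) := by
  rw [← qBinom_mul_qPoch_sub_eq_prod_Ico (qPoch_ne_zero hq _) (by omega),
    ← qPoch_mul_prod_Ico q (Nat.sub_le N a), show 2 * N - (N + a) = N - a by omega, mul_assoc]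

theorem tendsto_qBinom_mul_qPoch (hq : ‖q‖ < 1) (a : ℕ) :
    Tendsto (fun N => qBinom q (2 * N) (N + a) * qPoch q N) atTop (𝓝 1) := by
  have h := (tendsto_prod_Ico_one_sub_pow (b := fun N => 2 * N) hq
    (tendsto_add_atTop_nat a)).mul
      (tendsto_prod_Ico_one_sub_pow (b := id) hq (tendsto_sub_atTop_nat a))
  rw [mul_one] at h
  exact h.congr' ((eventually_ge_atTop a).mono fun N ha =>
    (qBinom_mul_qPoch_eq_prod_Ico_mul_prod_Ico hq ha).symm)

theorem norm_qBinom_mul_qPoch_le (hq : ‖q‖ < 1) {N a : ℕ} (ha : a ≤ N) :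
    ‖qBinom q (2 * N) (N + a) * qPoch q N‖ ≤ Real.exp (1 - ‖q‖)⁻¹ ^ 2 := by
  rw [qBinom_mul_qPoch_eq_prod_Ico_mul_prod_Ico hq ha, norm_mul, sq]
  exact mul_le_mul (norm_prod_Ico_one_sub_pow_le hq _ _) (norm_prod_Ico_one_sub_pow_le hq _ _)
    (norm_nonneg _) (Real.exp_pos _).le

end CentralCoefficient

theorem prod_range_one_add_odd_pow_sq {K : Type*} [Field K] {s : K} (hs : s ≠ 0) (N : ℕ) :
    ∏ i ∈ range N, (1 + s ^ (2 * i + 1)) ^ 2 =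
      ∑ k ∈ range (2 * N + 1), s ^ (((k : ℤ) - N) ^ 2) * qBinom (s ^ 2) (2 * N) k := by
  have hodd : ∑ i ∈ range N, (2 * i + 1) = N ^ 2 := by
    induction N with
    | zero => rfl
    | succ n ih => rw [sum_range_succ, ih]; ring
  have hfactor (j : ℕ) :
      (s ^ 2) ^ j * s ^ (1 - 2 * (N : ℤ)) = s ^ (2 * (j : ℤ) + 1 - 2 * N) := by
    rw [← pow_mul, ← zpow_natCast, ← zpow_add₀ hs]
    push_cast
    ring_nf
  have hlhs : s ^ (N ^ 2) * ∏ j ∈ range (2 * N), (1 + (s ^ 2) ^ j * s ^ (1 - 2 * (N : ℤ))) =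
      ∏ i ∈ range N, (1 + s ^ (2 * i + 1)) ^ 2 := by
    simp_rw [hfactor]
    rw [two_mul, prod_range_add, ← prod_range_reflect _ N, ← hodd, ← prod_pow_eq_pow_sum,
      ← mul_assoc, ← prod_mul_distrib, ← prod_mul_distrib]
    refine prod_congr rfl fun i hi => ?_
    have hi : i < N := mem_range.1 hi
    rw [show 2 * ((N - 1 - i : ℕ) : ℤ) + 1 - 2 * N = -((2 * i + 1 : ℕ) : ℤ) by omega,
      show 2 * ((N + i : ℕ) : ℤ) + 1 - 2 * N = ((2 * i + 1 : ℕ) : ℤ) by push_cast; ring,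
      zpow_neg, zpow_natCast]
    field_simp
    ring
  have hterm (k : ℕ) : s ^ (N ^ 2) * ((s ^ 2) ^ k.choose 2 * (s ^ (1 - 2 * (N : ℤ))) ^ k) =
      s ^ (((k : ℤ) - N) ^ 2) := by
    have hexp : ((N ^ 2 + 2 * k.choose 2 : ℕ) : ℤ) + (1 - 2 * N) * k = ((k : ℤ) - N) ^ 2 := by
      have h : (((N ^ 2 + 2 * k.choose 2 : ℕ) : ℚ) + (1 - 2 * N) * k) = ((k : ℚ) - N) ^ 2 := by
        push_cast
        rw [Nat.cast_choose_two]
        ring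
      exact_mod_cast h
    rw [← hexp, zpow_add₀ hs, zpow_mul, zpow_natCast, zpow_natCast, pow_add, pow_mul]
    ring
  rw [← hlhs, prod_one_add_pow_mul_eq_sum_qBinom, mul_sum]
  refine sum_congr rfl fun k _ => ?_
  rw [← hterm k]
  ring

section Jacobi

variable {𝕜 : Type*} [NormedField 𝕜] {s : 𝕜}

theorem prod_range_jacobi_eq_sum_Icc (hs : ‖s‖ < 1) (hs0 : s ≠ 0) (N : ℕ) :
    ∏ i ∈ range N, ((1 - s ^ (2 * i + 2)) * (1 + s ^ (2 * i + 1)) ^ 2) =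
      ∑ m ∈ Icc (-N : ℤ) N,
        s ^ (m ^ 2) * (qBinom (s ^ 2) (2 * N) (N + m.natAbs) * qPoch (s ^ 2) N) := by
  have hq : ‖s ^ 2‖ < 1 := by rw [norm_pow]; exact pow_lt_one₀ (norm_nonneg s) hs two_ne_zero
  have hpoch : ∏ i ∈ range N, (1 - s ^ (2 * i + 2)) = qPoch (s ^ 2) N :=
    prod_congr rfl fun i _ => by rw [← pow_mul, mul_add, mul_one]
  rw [prod_mul_distrib, hpoch, prod_range_one_add_odd_pow_sq hs0, mul_sum,
    Int.Icc_eq_finset_map, sum_map, show (N + 1 - -N : ℤ).toNat = 2 * N + 1 by omega]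
  refine sum_congr rfl fun k hk => ?_
  have hk : k ≤ 2 * N := Nat.lt_succ_iff.1 (mem_range.1 hk)
  have hbinom :
      qBinom (s ^ 2) (2 * N) k = qBinom (s ^ 2) (2 * N) (N + (-N + k : ℤ).natAbs) := by
    rcases le_total N k with h | h
    · congr 1
      omega
    · rw [← qBinom_symm (qPoch_ne_zero hq) hk]
      congr 1
      omega
  simp only [Function.Embedding.trans_apply, Nat.castEmbedding_apply, addLeftEmbedding_apply]
  rw [hbinom, neg_add_eq_sub]
  ring

theorem summable_pow_natAbs {r : ℝ} (hr₀ : 0 ≤ r) (hr : r < 1) :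
    Summable fun m : ℤ => r ^ m.natAbs :=
  .of_nat_of_neg (by simpa using summable_geometric_of_lt_one hr₀ hr)
    (by simpa using summable_geometric_of_lt_one hr₀ hr)

theorem norm_zpow_sq_le (hs : ‖s‖ ≤ 1) (m : ℤ) : ‖s ^ (m ^ 2)‖ ≤ ‖s‖ ^ m.natAbs := by
  rw [← Int.natAbs_sq m, ← Nat.cast_pow, zpow_natCast, norm_pow]
  exact pow_le_pow_of_le_one (norm_nonneg s) hs (Nat.le_self_pow two_ne_zero _)

theorem summable_norm_zpow_sq (hs : ‖s‖ < 1) : Summable fun m : ℤ => ‖s ^ (m ^ 2)‖ :=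
  (summable_pow_natAbs (norm_nonneg s) hs).of_nonneg_of_le (fun _ => norm_nonneg _)
    (norm_zpow_sq_le hs.le)

theorem summable_norm_pow_of_le (hs : ‖s‖ < 1) {e : ℕ → ℕ} (he : ∀ n, n ≤ e n) :
    Summable fun n => ‖s ^ e n‖ :=
  (summable_geometric_of_lt_one (norm_nonneg s) hs).of_nonneg_of_le (fun _ => norm_nonneg _)
    fun n => by
      rw [norm_pow]
      exact pow_le_pow_of_le_one (norm_nonneg s) hs.le (he n)

variable [CompleteSpace 𝕜]

theorem multipliable_jacobi (hs : ‖s‖ < 1) :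
    Multipliable fun n : ℕ => (1 - s ^ (2 * n + 2)) * (1 + s ^ (2 * n + 1)) ^ 2 := by
  have h₁ : Multipliable fun n : ℕ => 1 + -s ^ (2 * n + 2) :=
    multipliable_one_add_of_summable <| by
      simpa using summable_norm_pow_of_le hs (e := fun n => 2 * n + 2) fun n => by omega
  have h₂ : Multipliable fun n : ℕ => 1 + s ^ (2 * n + 1) :=
    multipliable_one_add_of_summable <| summable_norm_pow_of_le hs fun n => by omega
  simpa [sub_eq_add_neg] using h₁.mul (h₂.pow 2)

theorem tendsto_prod_range_jacobi (hs : ‖s‖ < 1) :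
    Tendsto (fun N => ∏ i ∈ range N, ((1 - s ^ (2 * i + 2)) * (1 + s ^ (2 * i + 1)) ^ 2))
      atTop (𝓝 (∑' m : ℤ, s ^ (m ^ 2))) := by
  rcases eq_or_ne s 0 with rfl | hs0
  · simp [zero_zpow_eq]
  have hq : ‖s ^ 2‖ < 1 := by rw [norm_pow]; exact pow_lt_one₀ (norm_nonneg s) hs two_ne_zero
  have hsum (N : ℕ) : ∏ i ∈ range N, ((1 - s ^ (2 * i + 2)) * (1 + s ^ (2 * i + 1)) ^ 2) =
      ∑' m : ℤ, (Icc (-N : ℤ) N : Set ℤ).indicator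
        (fun m => s ^ (m ^ 2) * (qBinom (s ^ 2) (2 * N) (N + m.natAbs) * qPoch (s ^ 2) N)) m := by
    rw [prod_range_jacobi_eq_sum_Icc hs hs0, sum_eq_tsum_indicator]
  simp only [hsum]
  refine tendsto_tsum_of_dominated_convergence
    (bound := fun m => Real.exp (1 - ‖s ^ 2‖)⁻¹ ^ 2 * ‖s‖ ^ m.natAbs)
    ((summable_pow_natAbs (norm_nonneg s) hs).mul_left _) (fun m => ?_)
    (.of_forall fun N m => ?_)
  · have h := (tendsto_qBinom_mul_qPoch hq m.natAbs).const_mul (s ^ (m ^ 2))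
    rw [mul_one] at h
    refine h.congr' ((eventually_ge_atTop m.natAbs).mono fun N hN => ?_)
    dsimp only
    rw [Set.indicator_of_mem (by simp only [coe_Icc, Set.mem_Icc]; omega)]
  · by_cases hm : m.natAbs ≤ N
    · rw [Set.indicator_of_mem (by simp only [coe_Icc, Set.mem_Icc]; omega), norm_mul, mul_comm]
      exact mul_le_mul (norm_qBinom_mul_qPoch_le hq hm) (norm_zpow_sq_le hs.le m)
        (norm_nonneg _) (by positivity)
    · rw [Set.indicator_of_notMem (by simp only [coe_Icc, Set.mem_Icc]; omega), norm_zero]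
      positivity

end Jacobi

/-- Specialization `t = 1` of the Jacobi triple product identity:
`∏_{n≥1} (1 - s^{2n})(1 + s^{2n-1})² = ∑_{k∈ℤ} s^{k²}` for `|s| < 1`,
with the product convergent and the series absolutely convergent. -/
theorem jacobi_triple_product_t_eq_one (s : ℂ) (hs : ‖s‖ < 1) :
    Multipliable (fun n : ℕ => (1 - s ^ (2 * n + 2)) * (1 + s ^ (2 * n + 1)) ^ 2) ∧
    Summable (fun k : ℤ => ‖s ^ (k ^ 2)‖) ∧
    (∏' n : ℕ, (1 - s ^ (2 * n + 2)) * (1 + s ^ (2 * n + 1)) ^ 2) =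
      ∑' k : ℤ, s ^ (k ^ 2) :=
  ⟨multipliable_jacobi hs, summable_norm_zpow_sq hs,
    tendsto_nhds_unique (multipliable_jacobi hs).hasProd.tendsto_prod_nat
      (tendsto_prod_range_jacobi hs)⟩
end

section
/- For every complex number s with |s| < 1, one has ∏_{n=1}^∞ (1 − s^{2n})(1 − s^{2n−1})² = Σ_{k∈ℤ} (−1)^k s^{k²}, with the product convergent and the series absolutely convergent. -/
/-!
Put `q = s²`. Gauss's `q`-binomial theorem
`∏_{j<m} (1 + x s^{2j+1}) = ∑_k [m, k]_q s^{k²} x^k`, evaluated at `m = 2N` and `x = -s^{-2N}`,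
gives the finite identity `(∏_{i<N} (1 - s^{2i+1}))² = ∑_{|k| ≤ N} [2N, N+k]_q (-1)^k s^{k²}`.
As `N → ∞` the coefficient `[2N, N+k]_q` tends to `1 / (q; q)_∞`, and all Gaussian binomials are
bounded because `(q; q)_m` converges to a nonzero limit, so dominated convergence for series
(Tannery's theorem) passes to the limit.
-/

open Finset Filter Topology

namespace JacobiTriple

section Algebra

section CommRing

variable {R : Type*} [CommRing R] {s : R}

/-- `qPoch s m = (s²; s²)_m`. -/
def qPoch (s : R) (m : ℕ) : R := ∏ j ∈ range m, (1 - s ^ (2 * j + 2))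

@[simp]
lemma qPoch_zero : qPoch s 0 = 1 := prod_range_zero _

lemma qPoch_succ (m : ℕ) : qPoch s (m + 1) = qPoch s m * (1 - s ^ (2 * m + 2)) :=
  prod_range_succ _ _

lemma qPoch_zero_left (m : ℕ) : qPoch (0 : R) m = 1 := by
  simp [qPoch]

end CommRing

variable {K : Type*} [Field K] {s : K}

/-- The Gaussian binomial coefficient `[m, k]` in base `s²` (not `0` when `k > m`). -/
def qBinom (s : K) (m k : ℕ) : K := qPoch s m / (qPoch s k * qPoch s (m - k))

lemma qPoch_ne_zero (hs : ∀ n, s ^ (2 * n + 2) ≠ 1) (m : ℕ) : qPoch s m ≠ 0 :=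
  prod_ne_zero_iff.2 fun j _ => sub_ne_zero.2 (hs j).symm

lemma qBinom_zero_right (hs : ∀ n, s ^ (2 * n + 2) ≠ 1) (m : ℕ) : qBinom s m 0 = 1 := by
  simp [qBinom, qPoch_ne_zero hs]

lemma qBinom_self (hs : ∀ n, s ^ (2 * n + 2) ≠ 1) (m : ℕ) : qBinom s m m = 1 := by
  simp [qBinom, qPoch_ne_zero hs]

lemma qBinom_succ_succ (hs : ∀ n, s ^ (2 * n + 2) ≠ 1) (j k : ℕ) :
    qBinom s (j + k + 2) (k + 1) =
      qBinom s (j + k + 1) (k + 1) + s ^ (2 * j + 2) * qBinom s (j + k + 1) k := by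
  have h₁ : j + k + 2 - (k + 1) = j + 1 := by omega
  have h₂ : j + k + 1 - (k + 1) = j := by omega
  have h₃ : j + k + 1 - k = j + 1 := by omega
  rw [qBinom, qBinom, qBinom, h₁, h₂, h₃, qPoch_succ (j + k + 1), qPoch_succ k, qPoch_succ j]
  have hpoch := qPoch_ne_zero hs
  have hk := sub_ne_zero.2 (hs k).symm
  have hj := sub_ne_zero.2 (hs j).symm
  field_simp
  ring

theorem prod_one_add_mul_odd_pow (hs : ∀ n, s ^ (2 * n + 2) ≠ 1) (x : K) (m : ℕ) :
    ∏ j ∈ range m, (1 + x * s ^ (2 * j + 1)) =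
      ∑ k ∈ range (m + 1), qBinom s m k * s ^ (k ^ 2) * x ^ k := by
  induction m with
  | zero => simp [qBinom_self hs]
  | succ m ih =>
    have hstep : ∀ k ∈ range m, qBinom s (m + 1) (k + 1) * s ^ ((k + 1) ^ 2) * x ^ (k + 1) =
        qBinom s m (k + 1) * s ^ ((k + 1) ^ 2) * x ^ (k + 1) +
          qBinom s m k * s ^ (k ^ 2) * x ^ k * (x * s ^ (2 * m + 1)) := by
      intro k hk
      obtain ⟨j, rfl⟩ := Nat.exists_eq_add_of_lt (mem_range.1 hk)
      rw [show k + j + 1 + 1 = j + k + 2 by ring, show k + j + 1 = j + k + 1 by ring,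
        qBinom_succ_succ hs]
      ring
    rw [prod_range_succ, ih, mul_add, mul_one, sum_mul, sum_range_succ', sum_range_succ _ m,
      sum_range_succ' _ (m + 1), sum_range_succ _ m, sum_congr rfl hstep, sum_add_distrib,
      qBinom_zero_right hs, qBinom_zero_right hs, qBinom_self hs, qBinom_self hs]
    ring

lemma prod_range_pow_two_mul_add_one {M : Type*} [CommMonoid M] (a : M) (N : ℕ) :
    ∏ j ∈ range N, a ^ (2 * j + 1) = a ^ (N ^ 2) := by
  induction N with
  | zero => simp
  | succ N ih => rw [prod_range_succ, ih, ← pow_add]; ring_nf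

lemma prod_one_sub_inv_odd_pow (hs₀ : s ≠ 0) (N : ℕ) :
    ∏ j ∈ range N, (1 - (s ^ (2 * j + 1))⁻¹) =
      (-1) ^ N * (s ^ (N ^ 2))⁻¹ * ∏ j ∈ range N, (1 - s ^ (2 * j + 1)) := by
  have hfactor (j : ℕ) :
      1 - (s ^ (2 * j + 1))⁻¹ = -1 * (s ^ (2 * j + 1))⁻¹ * (1 - s ^ (2 * j + 1)) := by
    field_simp
    ring
  simp_rw [hfactor, prod_mul_distrib, prod_const, card_range, prod_inv_distrib,
    prod_range_pow_two_mul_add_one]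

lemma prod_one_sub_odd_pow_div_even_pow (hs₀ : s ≠ 0) (N : ℕ) :
    ∏ j ∈ range (2 * N), (1 - s ^ (2 * j + 1) / s ^ (2 * N)) =
      (-1) ^ N * (s ^ (N ^ 2))⁻¹ * (∏ j ∈ range N, (1 - s ^ (2 * j + 1))) ^ 2 := by
  have hlow : ∀ j ∈ range N, 1 - s ^ (2 * j + 1) / s ^ (2 * N) =
      1 - (s ^ (2 * (N - 1 - j) + 1))⁻¹ := by
    intro j hj
    have hN : 2 * N = (2 * j + 1) + (2 * (N - 1 - j) + 1) := by
      have := mem_range.1 hj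
      omega
    rw [hN, pow_add s (2 * j + 1), div_mul_cancel_left₀ (pow_ne_zero _ hs₀)]
  have hhigh (j : ℕ) : 1 - s ^ (2 * (N + j) + 1) / s ^ (2 * N) = 1 - s ^ (2 * j + 1) := by
    rw [mul_add, add_assoc, pow_add, mul_div_cancel_left₀ _ (pow_ne_zero _ hs₀)]
  have hsplit := prod_range_add (fun j => 1 - s ^ (2 * j + 1) / s ^ (2 * N)) N N
  rw [← two_mul] at hsplit
  rw [hsplit, prod_congr rfl hlow,
    prod_range_reflect (fun j => 1 - (s ^ (2 * j + 1))⁻¹), prod_one_sub_inv_odd_pow hs₀]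
  simp_rw [hhigh]
  ring

theorem sq_prod_one_sub_odd_pow (hs : ∀ n, s ^ (2 * n + 2) ≠ 1) (N : ℕ) :
    (∏ i ∈ range N, (1 - s ^ (2 * i + 1))) ^ 2 =
      ∑ k ∈ Icc (-N : ℤ) N, qBinom s (2 * N) (N + k).toNat * ((-1) ^ k * s ^ (k ^ 2)) := by
  rcases eq_or_ne s 0 with rfl | hs₀
  · rw [sum_eq_single_of_mem 0 (by simp) fun k _ hk => by simp [zero_zpow _ (pow_ne_zero 2 hk)]]
    simp [qBinom, qPoch_zero_left]
  have hG := prod_one_add_mul_odd_pow hs (-(s ^ (2 * N))⁻¹) (2 * N)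
  simp_rw [neg_mul, ← div_eq_inv_mul, ← sub_eq_add_neg,
    prod_one_sub_odd_pow_div_even_pow hs₀] at hG
  have hreindex :
      ∑ k ∈ Icc (-N : ℤ) N, qBinom s (2 * N) (N + k).toNat * ((-1) ^ k * s ^ (k ^ 2)) =
        ∑ m ∈ range (2 * N + 1),
          qBinom s (2 * N) m * ((-1) ^ ((m : ℤ) - N) * s ^ (((m : ℤ) - N) ^ 2)) := by
    refine sum_nbij' (fun k => (N + k).toNat) (fun m => m - N) ?_ ?_ ?_ ?_ ?_ <;> intro k hk <;>
      simp only [mem_Icc, mem_range] at hk ⊢ <;> try omega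
    rw [show ((N + k).toNat : ℤ) - N = k by omega]
  have hc : (-1) ^ N * (s ^ (N ^ 2))⁻¹ ≠ (0 : K) := by simp [hs₀]
  rw [hreindex, ← mul_right_inj' hc, hG, mul_sum]
  refine sum_congr rfl fun m _ => ?_
  have hexp : ((m : ℤ) - N) ^ 2 = ((m ^ 2 + N ^ 2 : ℕ) : ℤ) - ((2 * N * m : ℕ) : ℤ) := by
    push_cast
    ring
  rw [hexp, zpow_sub₀ hs₀, zpow_sub₀ (neg_ne_zero.2 one_ne_zero), zpow_natCast, zpow_natCast,
    zpow_natCast, zpow_natCast, neg_pow, inv_pow, ← pow_mul, pow_add]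
  field_simp

end Algebra

section Analysis

variable {𝕜 : Type*} [NormedField 𝕜] {s : 𝕜}

lemma pow_ne_one_of_norm_lt_one (hs : ‖s‖ < 1) {n : ℕ} (hn : n ≠ 0) : s ^ n ≠ 1 := fun h => by
  simpa [← norm_pow, h] using pow_lt_one₀ (norm_nonneg s) hs hn

lemma summable_norm_pow_comp (hs : ‖s‖ < 1) {c : ℕ → ℕ} (hc : ∀ n, n ≤ c n) :
    Summable fun n => ‖s ^ c n‖ :=
  (summable_geometric_of_lt_one (norm_nonneg s) hs).of_nonneg_of_le (fun _ => norm_nonneg _)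
    fun n => by simpa using pow_le_pow_of_le_one (norm_nonneg s) hs.le (hc n)

lemma multipliable_one_sub_pow_comp [CompleteSpace 𝕜] (hs : ‖s‖ < 1) {c : ℕ → ℕ}
    (hc : ∀ n, n ≤ c n) : Multipliable fun n => 1 - s ^ c n := by
  simpa [sub_eq_add_neg] using
    multipliable_one_add_of_summable (f := fun n => -s ^ c n)
      (by simpa using summable_norm_pow_comp hs hc)

lemma tprod_one_sub_pow_comp_ne_zero [CompleteSpace 𝕜] (hs : ‖s‖ < 1) {c : ℕ → ℕ}
    (hc : ∀ n, n < c n) : ∏' n, (1 - s ^ c n) ≠ 0 := by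
  have hne (n : ℕ) : 1 + -s ^ c n ≠ 0 := by
    rw [← sub_eq_add_neg, sub_ne_zero, ne_comm]
    exact pow_ne_one_of_norm_lt_one hs (Nat.ne_zero_of_lt (hc n))
  simpa [sub_eq_add_neg] using
    tprod_one_add_ne_zero_of_summable hne
      (by simpa using summable_norm_pow_comp hs fun n => (hc n).le)

lemma tendsto_qPoch [CompleteSpace 𝕜] (hs : ‖s‖ < 1) :
    Tendsto (qPoch s) atTop (𝓝 (∏' n, (1 - s ^ (2 * n + 2)))) :=
  (multipliable_one_sub_pow_comp hs fun n => by omega).hasProd.tendsto_prod_nat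

lemma exists_norm_qBinom_le [CompleteSpace 𝕜] (hs : ‖s‖ < 1) :
    ∃ C, ∀ m k, ‖qBinom s m k‖ ≤ C := by
  have hP := tprod_one_sub_pow_comp_ne_zero hs (c := fun n => 2 * n + 2) fun n => by omega
  obtain ⟨C, hC⟩ := (tendsto_qPoch hs).norm.bddAbove_range
  obtain ⟨D, hD⟩ := ((tendsto_qPoch hs).inv₀ hP).norm.bddAbove_range
  simp only [mem_upperBounds, Set.forall_mem_range] at hC hD
  refine ⟨C * D * D, fun m k => ?_⟩
  rw [qBinom, div_eq_mul_inv, mul_inv, ← mul_assoc, norm_mul, norm_mul]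
  have hC₀ : 0 ≤ C := (norm_nonneg _).trans (hC 0)
  have hD₀ : 0 ≤ D := (norm_nonneg _).trans (hD 0)
  exact mul_le_mul (mul_le_mul (hC m) (hD k) (norm_nonneg _) hC₀) (hD (m - k)) (norm_nonneg _)
    (mul_nonneg hC₀ hD₀)

lemma tendsto_qBinom_two_mul [CompleteSpace 𝕜] (hs : ‖s‖ < 1) (k : ℤ) :
    Tendsto (fun N : ℕ => qBinom s (2 * N) (N + k).toNat) atTop
      (𝓝 (∏' n, (1 - s ^ (2 * n + 2)))⁻¹) := by
  have hP := tprod_one_sub_pow_comp_ne_zero hs (c := fun n => 2 * n + 2) fun n => by omega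
  have hlim {u : ℕ → ℕ} (hu : ∀ N, N ≤ u N + k.natAbs) :
      Tendsto (fun N => qPoch s (u N)) atTop (𝓝 (∏' n, (1 - s ^ (2 * n + 2)))) :=
    (tendsto_qPoch hs).comp <| tendsto_atTop_atTop.2 fun b => ⟨b + k.natAbs, fun N hN => by
      have := hu N
      omega⟩
  have hlim₁ := hlim (u := fun N => 2 * N) (by omega)
  have hlim₂ := hlim (u := fun N => (N + k).toNat) (by omega)
  have hlim₃ := hlim (u := fun N => 2 * N - (N + k).toNat) (by omega)
  have h := hlim₁.div (hlim₂.mul hlim₃) (mul_ne_zero hP hP)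
  rwa [div_mul_cancel_left₀ hP] at h

lemma norm_zpow_sq_le (hs : ‖s‖ ≤ 1) (k : ℤ) : ‖s ^ (k ^ 2)‖ ≤ ‖s‖ ^ k.natAbs := by
  rw [norm_zpow, ← Int.natAbs_sq, ← Nat.cast_pow, zpow_natCast]
  exact pow_le_pow_of_le_one (norm_nonneg s) hs (Nat.le_self_pow two_ne_zero _)

lemma summable_norm_neg_one_zpow_mul_zpow_sq (hs : ‖s‖ < 1) :
    Summable fun k : ℤ => ‖(-1) ^ k * s ^ (k ^ 2)‖ := by
  have hgeom := summable_geometric_of_lt_one (norm_nonneg s) hs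
  have hgeom' : Summable fun k : ℤ => ‖s‖ ^ k.natAbs :=
    .of_nat_of_neg (by simpa using hgeom) (by simpa using hgeom)
  exact hgeom'.of_nonneg_of_le (fun _ => norm_nonneg _) fun k => by
    simpa using norm_zpow_sq_le hs.le k

theorem tendsto_sq_prod_one_sub_odd_pow [CompleteSpace 𝕜] (hs : ‖s‖ < 1) :
    Tendsto (fun N => (∏ i ∈ range N, (1 - s ^ (2 * i + 1))) ^ 2) atTop
      (𝓝 ((∏' n, (1 - s ^ (2 * n + 2)))⁻¹ * ∑' k : ℤ, (-1) ^ k * s ^ (k ^ 2))) := by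
  obtain ⟨C, hC⟩ := exists_norm_qBinom_le hs
  let term (N : ℕ) (k : ℤ) := qBinom s (2 * N) (N + k).toNat * ((-1) ^ k * s ^ (k ^ 2))
  have hfinite (N : ℕ) : (∏ i ∈ range N, (1 - s ^ (2 * i + 1))) ^ 2 =
      ∑' k, (Icc (-N : ℤ) N : Set ℤ).indicator (term N) k := by
    rw [sq_prod_one_sub_odd_pow fun n => pow_ne_one_of_norm_lt_one hs (by omega),
      ← _root_.tsum_subtype, Finset.tsum_subtype']
  simp_rw [hfinite, ← tsum_mul_left]
  refine tendsto_tsum_of_dominated_convergence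
    ((summable_norm_neg_one_zpow_mul_zpow_sq hs).mul_left C) (fun k => ?_)
    (.of_forall fun N k => ?_)
  · refine ((tendsto_qBinom_two_mul hs k).mul_const _).congr' ?_
    filter_upwards [eventually_ge_atTop k.natAbs] with N hN
    rw [Set.indicator_of_mem (by simp; omega)]
  · refine (norm_indicator_le_norm_self _ _).trans ?_
    rw [norm_mul]
    exact mul_le_mul_of_nonneg_right (hC _ _) (norm_nonneg _)

end Analysis

end JacobiTriple

open JacobiTriple in
/-- Specialization `t = -1` of the Jacobi triple product identity:
`∏_{n≥1} (1 - s^{2n})(1 - s^{2n-1})² = ∑_{k∈ℤ} (-1)^k s^{k²}` for `|s| < 1`,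
with the product convergent and the series absolutely convergent. -/
theorem jacobi_triple_product_t_eq_neg_one (s : ℂ) (hs : ‖s‖ < 1) :
    Multipliable (fun n : ℕ => (1 - s ^ (2 * n + 2)) * (1 - s ^ (2 * n + 1)) ^ 2) ∧
    Summable (fun k : ℤ => ‖(-1 : ℂ) ^ k * s ^ (k ^ 2)‖) ∧
    (∏' n : ℕ, (1 - s ^ (2 * n + 2)) * (1 - s ^ (2 * n + 1)) ^ 2) =
      ∑' k : ℤ, (-1 : ℂ) ^ k * s ^ (k ^ 2) := by
  have heven : Multipliable fun n : ℕ => 1 - s ^ (2 * n + 2) :=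
    multipliable_one_sub_pow_comp hs fun n => by omega
  have hodd : Multipliable fun n : ℕ => 1 - s ^ (2 * n + 1) :=
    multipliable_one_sub_pow_comp hs fun n => by omega
  have hP : ∏' n : ℕ, (1 - s ^ (2 * n + 2)) ≠ 0 :=
    tprod_one_sub_pow_comp_ne_zero hs fun n => by omega
  refine ⟨heven.mul (hodd.pow 2), summable_norm_neg_one_zpow_mul_zpow_sq hs, ?_⟩
  rw [heven.tprod_mul (hodd.pow 2), hodd.tprod_pow,
    tendsto_nhds_unique (hodd.hasProd.tendsto_prod_nat.pow 2) (tendsto_sq_prod_one_sub_odd_pow hs)]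
  field_simp
end

section
/- (Euler's pentagonal number identity.) For every complex number q with |q| < 1, one has ∏_{n=1}^∞ (1 − q^n) = Σ_{j∈ℤ} (−1)^j q^{(3j² − j)/2}, with the product convergent and the series absolutely convergent. -/
/-!
Mathlib proves the identity in any topological ring (`Pentagonal.tprod_one_sub_pow`) by a
telescoping recurrence for the series `A_k = ∑ₙ x^((k+1)n) ∏_{i ≤ n} (1 - x^(k+i+1))`, provided
these series converge and the remainders `x^((k+1)(3k+4)/2) A_k` tend to `0`. For `‖x‖ < 1` in a
complete normed ring both hold because every product `∏ (1 - x^m)` over distinct exponents is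
bounded by `exp (1 - ‖x‖)⁻¹`, so `A_k` is dominated by a geometric series uniformly in `k`.
Over `ℂ` the sum over `ℤ` is then regrouped into the pairs `j = -k, k + 1`.
-/

open Filter Topology Finset

theorem summable_pow_pentagonal {r : ℝ} (hr₀ : 0 ≤ r) (hr₁ : r < 1) :
    Summable fun k : ℤ ↦ r ^ pentagonal k :=
  (summable_geometric_of_lt_one hr₀ hr₁).comp_injective pentagonal_injective

section NormedRing

variable {R : Type*} [NormedCommRing R] [NormOneClass R] {x : R}

theorem norm_prod_range_one_sub_pow_le (hx : ‖x‖ < 1) (k m : ℕ) :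
    ‖∏ i ∈ range m, (1 - x ^ (k + i + 1))‖ ≤ Real.exp (1 - ‖x‖)⁻¹ := by
  have hx₀ := norm_nonneg x
  calc ‖∏ i ∈ range m, (1 - x ^ (k + i + 1))‖
      ≤ ∏ i ∈ range m, (1 + ‖x‖ ^ i) := by
        refine (Finset.norm_prod_le _ _).trans
          (prod_le_prod (fun _ _ ↦ norm_nonneg _) fun i _ ↦ ?_)
        grw [norm_sub_le, norm_one, norm_pow_le,
          pow_le_pow_of_le_one hx₀ hx.le (by omega : i ≤ k + i + 1)]
    _ ≤ Real.exp (∑ i ∈ range m, ‖x‖ ^ i) := Real.prod_one_add_le_exp_sum _ fun _ ↦ by positivity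
    _ ≤ Real.exp (1 - ‖x‖)⁻¹ := by
        gcongr
        exact (summable_geometric_of_lt_one hx₀ hx).sum_le_tsum _ (fun _ _ ↦ by positivity)
          |>.trans_eq (tsum_geometric_of_lt_one hx₀ hx)

theorem norm_pow_mul_prod_range_one_sub_pow_le (hx : ‖x‖ < 1) (k n : ℕ) :
    ‖x ^ ((k + 1) * n) * ∏ i ∈ range (n + 1), (1 - x ^ (k + i + 1))‖ ≤
      Real.exp (1 - ‖x‖)⁻¹ * ‖x‖ ^ n := by
  grw [norm_mul_le, norm_prod_range_one_sub_pow_le hx, norm_pow_le,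
    pow_le_pow_of_le_one (norm_nonneg x) hx.le (Nat.le_mul_of_pos_left n k.succ_pos), mul_comm]

theorem summable_norm_pow_mul_prod_range_one_sub_pow (hx : ‖x‖ < 1) (k : ℕ) :
    Summable fun n ↦ ‖x ^ ((k + 1) * n) * ∏ i ∈ range (n + 1), (1 - x ^ (k + i + 1))‖ :=
  .of_nonneg_of_le (fun _ ↦ norm_nonneg _) (norm_pow_mul_prod_range_one_sub_pow_le hx k)
    ((summable_geometric_of_lt_one (norm_nonneg x) hx).mul_left _)

theorem norm_tsum_pow_mul_prod_range_one_sub_pow_le (hx : ‖x‖ < 1) (k : ℕ) :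
    ‖∑' n, x ^ ((k + 1) * n) * ∏ i ∈ range (n + 1), (1 - x ^ (k + i + 1))‖ ≤
      Real.exp (1 - ‖x‖)⁻¹ * (1 - ‖x‖)⁻¹ :=
  tsum_of_norm_bounded ((hasSum_geometric_of_lt_one (norm_nonneg x) hx).mul_left _)
    (norm_pow_mul_prod_range_one_sub_pow_le hx k)

theorem tendsto_pow_mul_tsum_pow_mul_prod_range_one_sub_pow (hx : ‖x‖ < 1) :
    Tendsto (fun k ↦ (-1) ^ (k + 1) * x ^ ((k + 1) * (3 * k + 4) / 2) *
      ∑' n, x ^ ((k + 1) * n) * ∏ i ∈ range (n + 1), (1 - x ^ (k + i + 1))) atTop (𝓝 0) := by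
  set C := Real.exp (1 - ‖x‖)⁻¹ * (1 - ‖x‖)⁻¹
  refine squeeze_zero_norm (a := fun k ↦ ‖x‖ ^ k * C) (fun k ↦ ?_) ?_
  · have hexp : k ≤ (k + 1) * (3 * k + 4) / 2 := by
      rw [Nat.le_div_iff_mul_le two_pos]; nlinarith
    grw [norm_mul_le, norm_mul_le, norm_pow_le, norm_pow_le, norm_neg, norm_one, one_pow, one_mul,
      pow_le_pow_of_le_one (norm_nonneg x) hx.le hexp,
      norm_tsum_pow_mul_prod_range_one_sub_pow_le hx k]
  · simpa using (tendsto_pow_atTop_nhds_zero_of_lt_one (norm_nonneg x) hx).mul_const C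

variable [CompleteSpace R]

theorem multipliable_one_sub_pow_add (hx : ‖x‖ < 1) (k : ℕ) :
    Multipliable fun n ↦ 1 - x ^ (n + k + 1) := by
  simp_rw [sub_eq_add_neg]
  refine multipliable_one_add_of_summable <| .of_nonneg_of_le (fun _ ↦ norm_nonneg _) (fun n ↦ ?_)
    (summable_geometric_of_lt_one (norm_nonneg x) hx)
  grw [norm_neg, norm_pow_le,
    pow_le_pow_of_le_one (norm_nonneg x) hx.le (by omega : n ≤ n + k + 1)]

theorem summable_neg_one_pow_mul_pow_pentagonal_sub (hx : ‖x‖ < 1) :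
    Summable fun k : ℕ ↦ (-1) ^ k * (x ^ pentagonal (-k) - x ^ pentagonal (k + 1)) := by
  have hp := summable_pow_pentagonal (norm_nonneg x) hx
  refine .of_norm_bounded (g := fun k : ℕ ↦ ‖x‖ ^ pentagonal (-k) + ‖x‖ ^ pentagonal (k + 1))
    ((hp.comp_injective fun a b h ↦ by simpa using h).add
      (hp.comp_injective fun a b h ↦ by simpa using h)) fun k ↦ ?_
  grw [norm_mul_le, norm_pow_le, norm_neg, norm_one, one_pow, one_mul, norm_sub_le, norm_pow_le,
    norm_pow_le]

theorem tprod_one_sub_pow_eq_tsum_pentagonal (hx : ‖x‖ < 1) :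
    ∏' n, (1 - x ^ (n + 1)) =
      ∑' k : ℕ, (-1) ^ k * (x ^ pentagonal (-k) - x ^ pentagonal (k + 1)) :=
  Pentagonal.tprod_one_sub_pow (tendsto_pow_atTop_nhds_zero_of_norm_lt_one hx)
    (fun k ↦ (summable_norm_pow_mul_prod_range_one_sub_pow hx k).of_norm)
    (multipliable_one_sub_pow_add hx) (summable_neg_one_pow_mul_pow_pentagonal_sub hx)
    (tendsto_pow_mul_tsum_pow_mul_prod_range_one_sub_pow hx)

end NormedRing

theorem tsum_int_eq_tsum_nat_neg_add_add_one {M : Type*} [AddCommMonoid M] [TopologicalSpace M]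
    [ContinuousAdd M] [T2Space M] {f : ℤ → M} (hf : Summable f) :
    ∑' j, f j = ∑' k : ℕ, (f (-k) + f (k + 1)) := by
  rw [← tsum_comp_neg, ← tsum_nat_add_neg_add_one (f := fun j ↦ f (-j))
    ((Equiv.neg ℤ).summable_iff.mpr hf)]
  simp

theorem zpow_three_mul_sq_sub_div_two {G : Type*} [GroupWithZero G] (y : G) (j : ℤ) :
    y ^ ((3 * j ^ 2 - j) / 2) = y ^ pentagonal j := by
  rw [← zpow_natCast, natCast_pentagonal]
  ring_nf

/-- **Euler's pentagonal number identity.** For `|q| < 1`,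
`∏_{n≥1} (1 - q^n) = ∑_{j∈ℤ} (-1)^j q^{(3j² - j)/2}`,
with the product convergent and the series absolutely convergent.
(The exponents `(3j² - j)/2` are nonnegative integers, and `ℤ`-division is exact here.) -/
theorem euler_pentagonal_number_identity (q : ℂ) (hq : ‖q‖ < 1) :
    Multipliable (fun n : ℕ => (1 - q ^ (n + 1))) ∧
    Summable (fun j : ℤ => ‖(-1 : ℂ) ^ j * q ^ ((3 * j ^ 2 - j) / 2)‖) ∧
    (∏' n : ℕ, (1 - q ^ (n + 1))) = ∑' j : ℤ, (-1 : ℂ) ^ j * q ^ ((3 * j ^ 2 - j) / 2) := by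
  simp_rw [zpow_three_mul_sq_sub_div_two]
  have hsum : Summable fun j : ℤ ↦ ‖(-1 : ℂ) ^ j * q ^ pentagonal j‖ := by
    simpa using summable_pow_pentagonal (norm_nonneg q) hq
  refine ⟨ModularForm.multipliable_one_sub_pow hq, hsum, ?_⟩
  rw [tsum_int_eq_tsum_nat_neg_add_add_one hsum.of_norm]
  refine (tprod_one_sub_pow_eq_tsum_pentagonal hq).trans (tsum_congr fun k ↦ ?_)
  rw [zpow_neg, zpow_add_one₀ (by norm_num), zpow_natCast, ← inv_pow, inv_neg_one]
  ring
end

section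
/- For every τ in the upper half-plane and every real r > 0, the compactified free boson torus partition function satisfies Z(τ + 1, r) = Z(τ, r). -/
/-- The Dedekind eta function `η(τ) = e^{πiτ/12} ∏_{n≥1} (1 - e^{2πinτ})`. -/
noncomputable def dedekindEta (τ : ℂ) : ℂ :=
  Complex.exp ((Real.pi : ℂ) * Complex.I * τ / 12) *
    ∏' n : ℕ, (1 - Complex.exp (2 * (Real.pi : ℂ) * Complex.I * (n + 1) * τ))

/-- Holomorphic conformal weight `h_{e,m}(r) = ½ (e/r + mr/2)²` of the pseudovacuum
`|e,m⟩` of the free boson compactified on a circle of radius `r`. -/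
noncomputable def hWeight (r : ℝ) (e m : ℤ) : ℝ :=
  (1 / 2) * ((e : ℝ) / r + (m : ℝ) * r / 2) ^ 2

/-- Antiholomorphic conformal weight `h̄_{e,m}(r) = ½ (e/r - mr/2)²`. -/
noncomputable def hBarWeight (r : ℝ) (e m : ℤ) : ℝ :=
  (1 / 2) * ((e : ℝ) / r - (m : ℝ) * r / 2) ^ 2

/-- Torus partition function of the free boson with values in a circle of radius `r`:
`Z(τ,r) = (η(τ) η(τ)*)⁻¹ ∑_{(e,m)∈ℤ²} q^{h_{e,m}} q̄^{h̄_{e,m}}`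
with `q^h = exp(2πiτ h)`, `q̄^h̄ = exp(-2πi τ* h̄)`. -/
noncomputable def bosonZ (τ : ℂ) (r : ℝ) : ℂ :=
  (dedekindEta τ * (starRingEnd ℂ) (dedekindEta τ))⁻¹ *
    ∑' p : ℤ × ℤ,
      Complex.exp (2 * (Real.pi : ℂ) * Complex.I * τ * (hWeight r p.1 p.2 : ℝ)) *
      Complex.exp (-2 * (Real.pi : ℂ) * Complex.I * (starRingEnd ℂ) τ * (hBarWeight r p.1 p.2 : ℝ))

lemma exp_two_pi_I_int (k : ℤ) : Complex.exp (2 * (Real.pi : ℂ) * Complex.I * k) = 1 := by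
  rw [show 2 * (Real.pi : ℂ) * Complex.I * k = (k : ℂ) * (2 * Real.pi * Complex.I) by ring]
  exact Complex.exp_int_mul_two_pi_mul_I k

lemma eta_T (τ : ℂ) :
    dedekindEta (τ + 1) = Complex.exp ((Real.pi : ℂ) * Complex.I / 12) * dedekindEta τ := by
  unfold dedekindEta
  have hprod : (∏' n : ℕ, (1 - Complex.exp (2 * (Real.pi : ℂ) * Complex.I * (n + 1) * (τ + 1))))
      = ∏' n : ℕ, (1 - Complex.exp (2 * (Real.pi : ℂ) * Complex.I * (n + 1) * τ)) := by
    apply tprod_congr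
    intro n
    congr 1
    rw [show 2 * (Real.pi : ℂ) * Complex.I * (n + 1) * (τ + 1)
        = 2 * (Real.pi : ℂ) * Complex.I * (n + 1) * τ
          + 2 * (Real.pi : ℂ) * Complex.I * (((n : ℤ) + 1 : ℤ) : ℂ) by push_cast; ring]
    rw [Complex.exp_add, exp_two_pi_I_int, mul_one]
  rw [hprod, show (Real.pi : ℂ) * Complex.I * (τ + 1) / 12
      = (Real.pi : ℂ) * Complex.I / 12 + (Real.pi : ℂ) * Complex.I * τ / 12 by ring,
    Complex.exp_add]
  ring

/-- **Modular invariance `Z(τ+1) = Z(τ)`** of the torus partition function of the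
free boson compactified on a circle of radius `r`. -/
theorem bosonZ_T_invariance (τ : ℂ) (hτ : 0 < τ.im) (r : ℝ) (hr : 0 < r) :
    bosonZ (τ + 1) r = bosonZ τ r := by
  have hr' : r ≠ 0 := hr.ne'
  unfold bosonZ
  congr 1
  · -- eta part
    rw [eta_T]
    rw [map_mul, ← Complex.exp_conj]
    have hc : (starRingEnd ℂ) ((Real.pi : ℂ) * Complex.I / 12)
        = -((Real.pi : ℂ) * Complex.I / 12) := by
      simp [map_div₀, Complex.conj_I, Complex.conj_ofReal, map_ofNat]
      ring
    rw [hc]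
    rw [show Complex.exp ((Real.pi : ℂ) * Complex.I / 12) * dedekindEta τ *
        (Complex.exp (-((Real.pi : ℂ) * Complex.I / 12)) * (starRingEnd ℂ) (dedekindEta τ))
        = (Complex.exp ((Real.pi : ℂ) * Complex.I / 12) *
            Complex.exp (-((Real.pi : ℂ) * Complex.I / 12))) *
          (dedekindEta τ * (starRingEnd ℂ) (dedekindEta τ)) by ring,
      ← Complex.exp_add]
    simp
  · apply tsum_congr
    rintro ⟨e, m⟩
    rw [← Complex.exp_add, ← Complex.exp_add]
    have hhh : (hWeight r e m : ℝ) - hBarWeight r e m = ((e * m : ℤ) : ℝ) := by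
      unfold hWeight hBarWeight
      push_cast
      field_simp
      ring
    have hhc : (hWeight r e m : ℂ) - (hBarWeight r e m : ℂ) = ((e * m : ℤ) : ℂ) := by
      exact_mod_cast congrArg (Complex.ofReal) hhh
    have key : 2 * (Real.pi : ℂ) * Complex.I * (τ + 1) * (hWeight r e m : ℝ)
        + -2 * (Real.pi : ℂ) * Complex.I * (starRingEnd ℂ) (τ + 1) * (hBarWeight r e m : ℝ)
        = (2 * (Real.pi : ℂ) * Complex.I * τ * (hWeight r e m : ℝ)
          + -2 * (Real.pi : ℂ) * Complex.I * (starRingEnd ℂ) τ * (hBarWeight r e m : ℝ))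
          + 2 * (Real.pi : ℂ) * Complex.I * ((e * m : ℤ) : ℂ) := by
      rw [map_add, map_one]
      linear_combination (2 * (Real.pi : ℂ) * Complex.I) * hhc
    rw [key, Complex.exp_add, exp_two_pi_I_int, mul_one]
end

section
/- Let n ≥ 1 and let z₁, …, z_{2n} be pairwise distinct complex numbers. Let M be the 2n × 2n antisymmetric matrix with M_{ii} = 0 and M_{ij} = 1/(z_i − z_j) for i ≠ j. Then det M = Σ_{matchings} ∏_{pairs {i,j} in the matching} 1/(z_i − z_j)², where the sum ranges over all perfect matchings of {1, …, 2n} into n unordered pairs. -/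
/-!
Expand `det M` over permutations: only derangements contribute. Fix the largest index `m`.
A derangement in which `m` lies on a cycle of length at least three arises by inserting `m`
after some `a` into a cycle of a derangement `σ` of the other indices. With `q = σ⁻¹ a`, the
partial fraction identity
`1 / ((z a - z m) (z m - z q)) = (1 / (z a - z m) - 1 / (z q - z m)) / (z a - z q)`
turns the contribution of `a` into a difference whose sum over `a` vanishes, because `σ⁻¹`
permutes the other indices. A derangement in which `m` lies on a transposition `(m a)`
contributes `1 / (z a - z m) ^ 2` times the same expansion on the remaining indices, and this is
the recursion satisfied by the sum over perfect matchings.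
-/

open Finset Equiv Equiv.Perm

theorem inv_sub_mul_inv_sub_eq {K : Type*} [Field K] {a m q : K} (ham : a ≠ m) (hqm : q ≠ m)
    (haq : a ≠ q) :
    (a - m)⁻¹ * (m - q)⁻¹ = ((a - m)⁻¹ - (q - m)⁻¹) * (a - q)⁻¹ := by
  field_simp [sub_ne_zero.2 ham, sub_ne_zero.2 hqm, sub_ne_zero.2 haq, sub_ne_zero.2 hqm.symm]
  ring

namespace Equiv.Perm

variable {ι : Type*} [DecidableEq ι]

theorem prod_swap_mul_apply {R : Type*} [CommMonoid R] (f : ι → ι → R) {σ : Perm ι}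
    {s : Finset ι} {m a q : ι} (hm : m ∈ s) (hq : q ∈ s.erase m) (hσm : σ m = m)
    (hσq : σ q = a) :
    ∏ i ∈ s, f ((swap m a * σ) i) i =
      f a m * f m q * ∏ i ∈ (s.erase m).erase q, f (σ i) i := by
  rw [← mul_prod_erase s _ hm, ← mul_prod_erase _ _ hq, ← mul_assoc]
  congr 1
  · simp [hσm, hσq]
  · refine prod_congr rfl fun i hi => ?_
    have hiq := ne_of_mem_erase hi
    have him := ne_of_mem_erase (mem_of_mem_erase hi)
    rw [mul_apply,
      swap_apply_of_ne_of_ne (hσm ▸ σ.injective.ne him) (hσq ▸ σ.injective.ne hiq)]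

theorem disjoint_swap_of_apply_eq_self {σ : Perm ι} {x y : ι} (hx : σ x = x) (hy : σ y = y) :
    Disjoint (swap x y) σ :=
  disjoint_iff_eq_or_eq.2 fun i => by
    by_cases hi : i = x ∨ i = y
    · rcases hi with rfl | rfl <;> simp [*]
    · push Not at hi
      exact Or.inl (swap_apply_of_ne_of_ne hi.1 hi.2)

theorem swap_mul_mul_swap_mul_of_apply_eq_self {σ : Perm ι} {x y : ι} (hx : σ x = x)
    (hy : σ y = y) : swap x y * σ * (swap x y * σ) = σ * σ := by
  rw [(disjoint_swap_of_apply_eq_self hx hy).commute.symm.mul_mul_mul_comm, swap_mul_self, one_mul]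

variable [Fintype ι]

theorem support_swap_mul_of_apply_eq_self {σ : Perm ι} {x y : ι} (hxy : x ≠ y)
    (hx : σ x = x) (hy : σ y = y) :
    (swap x y * σ).support = insert x (insert y σ.support) := by
  rw [(disjoint_swap_of_apply_eq_self hx hy).support_mul, support_swap hxy, insert_union,
    singleton_union]

variable {M : Type*} [AddCommMonoid M]

/-- Removing `m` from its cycle, of length at least three, leaves a permutation supported on
`s.erase m`, and `m` can be put back after any `a` of that set. -/
theorem sum_support_of_apply_apply_ne (g : Perm ι → M) {s : Finset ι} {m : ι} (hm : m ∈ s) :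
    ∑ σ with σ.support = s ∧ σ (σ m) ≠ m, g σ =
      ∑ a ∈ s.erase m, ∑ σ with σ.support = s.erase m, g (swap m a * σ) := by
  rw [← sum_product']
  refine sum_nbij' (fun σ => (σ m, swap m (σ m) * σ)) (fun x => swap m x.1 * x.2)
    ?_ ?_ (fun σ _ => swap_mul_self_mul _ _ σ) ?_ fun σ _ => by rw [swap_mul_self_mul]
  · intro σ hσ
    simp only [mem_filter, mem_univ, true_and] at hσ
    obtain ⟨rfl, hσm⟩ := hσ
    have hm' := mem_support.1 hm
    simp [support_swap_mul_eq σ m hσm, sdiff_singleton_eq_erase, hm']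
  · rintro ⟨a, σ⟩ h
    simp only [mem_product, mem_filter, mem_univ, true_and] at h ⊢
    obtain ⟨ha, hσ⟩ := h
    have hσm : σ m = m := notMem_support.1 (hσ ▸ notMem_erase m s)
    have hσa : σ a ∈ s.erase m := hσ ▸ apply_mem_support.2 (hσ ▸ ha)
    have hτm : (swap m a * σ) m = a := by simp [hσm]
    have hτa : (swap m a * σ) a = σ a := swap_apply_of_ne_of_ne (ne_of_mem_erase hσa)
      (mem_support.1 (hσ ▸ ha))
    have hτ : (swap m a * σ) ((swap m a * σ) m) ≠ m := by
      rw [hτm, hτa]; exact ne_of_mem_erase hσa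
    refine ⟨?_, hτ⟩
    have h := support_swap_mul_eq _ m hτ
    rw [hτm, swap_mul_self_mul, hσ, sdiff_singleton_eq_erase] at h
    rw [← insert_erase hm, h, insert_erase (mem_support.2 (hτm.trans_ne (ne_of_mem_erase ha)))]
  · rintro ⟨a, σ⟩ h
    simp only [mem_product, mem_filter, mem_univ, true_and] at h
    have hσm : σ m = m := notMem_support.1 (h.2 ▸ notMem_erase m s)
    simp [hσm]

theorem sum_support_of_apply_apply_eq (g : Perm ι → M) {s : Finset ι} {m : ι} (hm : m ∈ s) :
    ∑ σ with σ.support = s ∧ σ (σ m) = m, g σ =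
      ∑ a ∈ s.erase m, ∑ σ with σ.support = (s.erase m).erase a, g (swap m a * σ) := by
  rw [sum_sigma']
  refine sum_nbij' (fun σ => ⟨σ m, swap m (σ m) * σ⟩) (fun x => swap m x.1 * x.2)
    ?_ ?_ (fun σ _ => swap_mul_self_mul _ _ σ) ?_ fun σ _ => by rw [swap_mul_self_mul]
  · intro σ hσ
    simp only [mem_filter, mem_univ, true_and] at hσ
    obtain ⟨hσ, hσm⟩ := hσ
    have hm' : σ m ≠ m := mem_support.1 (hσ ▸ hm)
    have h := support_swap_mul_of_apply_eq_self (σ := swap m (σ m) * σ) hm'.symm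
      (by simp) (by simp [hσm])
    rw [swap_mul_self_mul, hσ] at h
    simp only [mem_sigma, mem_filter, mem_univ, true_and, mem_erase]
    refine ⟨⟨hm', hσ ▸ apply_mem_support.2 (hσ ▸ hm)⟩, ?_⟩
    rw [h, erase_insert, erase_insert] <;> simp [hσm, hm'.symm]
  · rintro ⟨a, σ⟩ h
    simp only [mem_sigma, mem_filter, mem_univ, true_and] at h ⊢
    obtain ⟨ha, hσ⟩ := h
    have hσm : σ m = m := notMem_support.1 (by simp [hσ])
    have hσa : σ a = a := notMem_support.1 (by simp [hσ])
    refine ⟨?_, by simp [hσm, hσa]⟩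
    rw [support_swap_mul_of_apply_eq_self (ne_of_mem_erase ha).symm hσm hσa, hσ,
      insert_erase ha, insert_erase hm]
  · rintro ⟨a, σ⟩ h
    simp only [mem_sigma, mem_filter, mem_univ, true_and] at h
    have hσm : σ m = m := notMem_support.1 (by simp [h.2])
    simp [hσm]

theorem sum_support_of_mul_self_eq_one (g : Perm ι → M) {s : Finset ι} {m : ι} (hm : m ∈ s) :
    ∑ σ with σ.support = s ∧ σ * σ = 1, g σ =
      ∑ a ∈ s.erase m, ∑ σ with σ.support = (s.erase m).erase a ∧ σ * σ = 1,
        g (swap m a * σ) := by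
  have hfilter : univ.filter (fun σ : Perm ι => σ.support = s ∧ σ * σ = 1) =
      (univ.filter fun σ => σ.support = s ∧ σ (σ m) = m).filter (fun σ => σ * σ = 1) := by
    rw [filter_filter]
    refine filter_congr fun σ _ =>
      ⟨fun ⟨hσ, h⟩ => ⟨⟨hσ, ?_⟩, h⟩, fun ⟨⟨hσ, _⟩, h⟩ => ⟨hσ, h⟩⟩
    rw [← mul_apply, h, one_apply]
  rw [hfilter, sum_filter, sum_support_of_apply_apply_eq _ hm]
  refine sum_congr rfl fun a ha => ?_
  rw [← filter_filter, sum_filter fun σ : Perm ι => σ * σ = 1]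
  refine sum_congr rfl fun σ hσ => ?_
  have hσa : σ a = a := notMem_support.1 (by simp [(mem_filter.1 hσ).2])
  have hσm : σ m = m := notMem_support.1 (by simp [(mem_filter.1 hσ).2])
  rw [swap_mul_mul_swap_mul_of_apply_eq_self hσm hσa]

theorem sum_support_eq_sum_swap_mul (g : Perm ι → M) {s : Finset ι} {m : ι} (hm : m ∈ s) :
    ∑ σ with σ.support = s, g σ =
      ∑ a ∈ s.erase m, (∑ σ with σ.support = s.erase m, g (swap m a * σ) +
        ∑ σ with σ.support = (s.erase m).erase a, g (swap m a * σ)) := by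
  rw [sum_add_distrib, ← sum_support_of_apply_apply_ne g hm,
    ← sum_support_of_apply_apply_eq g hm, ← filter_filter, ← filter_filter, add_comm,
    sum_filter_add_sum_filter_not]

end Equiv.Perm

section SignedDerangementSum

variable {ι : Type*} [Fintype ι] [DecidableEq ι]

/-- For `A` with zero diagonal, the principal minor of `A` on the rows and columns `s`. -/
def signedDerangementSum {R : Type*} [CommRing R] (A : ι → ι → R) (s : Finset ι) : R :=
  ∑ σ with σ.support = s, (sign σ : R) * ∏ i ∈ s, A (σ i) i

theorem det_eq_signedDerangementSum_univ {R : Type*} [CommRing R] (A : Matrix ι ι R)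
    (hA : ∀ i, A i i = 0) : A.det = signedDerangementSum A univ := by
  unfold signedDerangementSum
  rw [Matrix.det_apply']
  refine (sum_subset (subset_univ _) fun σ _ hσ => ?_).symm
  obtain ⟨i, hi⟩ : ∃ i, σ i = i := by
    by_contra! h
    exact (mem_filter.not.1 hσ) ⟨mem_univ σ, eq_univ_of_forall fun i => mem_support.2 (h i)⟩
  rw [prod_eq_zero (mem_univ i) (by rw [hi, hA]), mul_zero]

theorem signedDerangementSum_empty {R : Type*} [CommRing R] (A : ι → ι → R) :
    signedDerangementSum A ∅ = 1 := by
  simp [signedDerangementSum, support_eq_empty_iff, filter_eq']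

variable {K : Type*} [Field K]

theorem sum_sign_swap_mul_mul_prod_eq_zero {z : ι → K} (hz : Function.Injective z)
    {s : Finset ι} {m : ι} (hm : m ∈ s) {σ : Perm ι} (hσ : σ.support = s.erase m) :
    ∑ a ∈ s.erase m, (sign (swap m a * σ) : K) *
      ∏ i ∈ s, (z ((swap m a * σ) i) - z i)⁻¹ = 0 := by
  have hσm : σ m = m := notMem_support.1 (hσ ▸ notMem_erase m s)
  have hterm : ∀ a ∈ s.erase m, (sign (swap m a * σ) : K) *
      ∏ i ∈ s, (z ((swap m a * σ) i) - z i)⁻¹ =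
        -(sign σ : K) * (∏ i ∈ s.erase m, (z (σ i) - z i)⁻¹) *
          ((z a - z m)⁻¹ - (z (σ⁻¹ a) - z m)⁻¹) := by
    intro a ha
    have ham := ne_of_mem_erase ha
    have hσq : σ (σ⁻¹ a) = a := σ.apply_symm_apply a
    have hq : σ⁻¹ a ∈ s.erase m := by
      rwa [← hσ, ← support_inv, apply_mem_support, support_inv, hσ]
    have hqm := ne_of_mem_erase hq
    have hqa : σ⁻¹ a ≠ a := fun h => mem_support.1 (hσ ▸ ha) (by rw [← h, hσq, h])
    rw [Perm.sign_mul, sign_swap ham.symm,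
      prod_swap_mul_apply (fun i j => (z i - z j)⁻¹) hm hq hσm hσq, ← mul_prod_erase _ _ hq,
      hσq]
    push_cast
    linear_combination
      (-(sign σ : K) * ∏ i ∈ (s.erase m).erase (σ⁻¹ a), (z (σ i) - z i)⁻¹) *
      inv_sub_mul_inv_sub_eq (hz.ne ham) (hz.ne hqm) (hz.ne hqa.symm)
  rw [sum_congr rfl hterm, ← mul_sum, sum_sub_distrib,
    Perm.sum_comp σ⁻¹ _ (fun x => (z x - z m)⁻¹), sub_self, mul_zero]
  intro x hx
  rw [mem_coe, ← hσ, ← support_inv]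
  exact mem_support.2 hx

theorem signedDerangementSum_eq_sum_erase {z : ι → K} (hz : Function.Injective z)
    {s : Finset ι} {m : ι} (hm : m ∈ s) :
    signedDerangementSum (fun i j => (z i - z j)⁻¹) s =
      ∑ a ∈ s.erase m, ((z a - z m) ^ 2)⁻¹ *
        signedDerangementSum (fun i j => (z i - z j)⁻¹) ((s.erase m).erase a) := by
  unfold signedDerangementSum
  rw [sum_support_eq_sum_swap_mul _ hm, sum_add_distrib, sum_comm,
    sum_eq_zero fun σ hσ => sum_sign_swap_mul_mul_prod_eq_zero hz hm (mem_filter.1 hσ).2,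
    zero_add]
  refine sum_congr rfl fun a ha => ?_
  rw [mul_sum]
  refine sum_congr rfl fun σ hσ => ?_
  have hσa : σ a = a := notMem_support.1 (by simp [(mem_filter.1 hσ).2])
  have hσm : σ m = m := notMem_support.1 (by simp [(mem_filter.1 hσ).2])
  rw [Perm.sign_mul, sign_swap (ne_of_mem_erase ha).symm,
    prod_swap_mul_apply (fun i j => (z i - z j)⁻¹) hm ha hσm hσa, ← neg_sub (z a), inv_neg,
    ← inv_pow]
  push_cast
  ring

end SignedDerangementSum

section MatchingSum

variable {ι : Type*} [Fintype ι] [LinearOrder ι] {K : Type*} [Field K]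

/-- A perfect matching of `s` is encoded as an involution with support `s`; each pair
`{i, σ i}` is counted once, through its smaller element. -/
def matchingSum (z : ι → K) (s : Finset ι) : K :=
  ∑ σ : Perm ι with σ.support = s ∧ σ * σ = 1,
    ∏ i with i < σ i, ((z i - z (σ i)) ^ 2)⁻¹

theorem matchingSum_empty (z : ι → K) : matchingSum z ∅ = 1 := by
  have h : (univ.filter fun σ : Perm ι => σ.support = ∅ ∧ σ * σ = 1) = {1} := by
    ext σ
    simp +contextual [support_eq_empty_iff]
  rw [matchingSum, h, sum_singleton]
  simp

theorem prod_filter_lt_swap_mul_apply {M : Type*} [CommMonoid M] (f : ι → ι → M)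
    {σ : Perm ι} {a m : ι} (ham : a < m) (hσa : σ a = a) (hσm : σ m = m) :
    ∏ i with i < (swap m a * σ) i, f i ((swap m a * σ) i) =
      f a m * ∏ i with i < σ i, f i (σ i) := by
  have hτ : ∀ i, i ≠ m → i ≠ a → (swap m a * σ) i = σ i := fun i him hia =>
    swap_apply_of_ne_of_ne (hσm ▸ σ.injective.ne him) (hσa ▸ σ.injective.ne hia)
  have hset : univ.filter (fun i => i < (swap m a * σ) i) =
      insert a (univ.filter fun i => i < σ i) := by
    ext i
    by_cases him : i = m
    · subst him
      simp only [mem_filter, mem_univ, true_and, mem_insert, mul_apply, hσm, swap_apply_left,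
        ham.not_gt, ham.ne', lt_self_iff_false, or_false]
    by_cases hia : i = a
    · subst hia
      simp only [mem_filter, mem_univ, true_and, mem_insert, mul_apply, hσa, swap_apply_right,
        ham, true_or]
    · simp only [mem_filter, mem_univ, true_and, mem_insert, hia, false_or, hτ i him hia]
  rw [hset, prod_insert (by simp [hσa]), mul_apply, hσa, swap_apply_right]
  refine congrArg _ (prod_congr rfl fun i hi => ?_)
  have hi := (mem_filter.1 hi).2
  rw [hτ i (by rintro rfl; simp [hσm] at hi) (by rintro rfl; simp [hσa] at hi)]

theorem matchingSum_eq_sum_erase_of_forall_le (z : ι → K) {s : Finset ι} {m : ι} (hm : m ∈ s)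
    (hmax : ∀ a ∈ s, a ≤ m) :
    matchingSum z s =
      ∑ a ∈ s.erase m, ((z a - z m) ^ 2)⁻¹ * matchingSum z ((s.erase m).erase a) := by
  unfold matchingSum
  rw [sum_support_of_mul_self_eq_one _ hm]
  refine sum_congr rfl fun a ha => ?_
  rw [mul_sum]
  refine sum_congr rfl fun σ hσ => ?_
  have hσ := (mem_filter.1 hσ).2.1
  rw [prod_filter_lt_swap_mul_apply (fun i j => ((z i - z j) ^ 2)⁻¹)
    ((hmax a (mem_of_mem_erase ha)).lt_of_ne (ne_of_mem_erase ha))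
    (notMem_support.1 (by simp [hσ])) (notMem_support.1 (by simp [hσ]))]

end MatchingSum

theorem signedDerangementSum_eq_matchingSum {ι K : Type*} [Fintype ι] [LinearOrder ι] [Field K]
    {z : ι → K} (hz : Function.Injective z) (s : Finset ι) :
    signedDerangementSum (fun i j => (z i - z j)⁻¹) s = matchingSum z s := by
  induction s using Finset.strongInduction with
  | H s ih =>
    rcases s.eq_empty_or_nonempty with rfl | hs
    · rw [signedDerangementSum_empty, matchingSum_empty]
    rw [signedDerangementSum_eq_sum_erase hz (s.max'_mem hs),
      matchingSum_eq_sum_erase_of_forall_le z (s.max'_mem hs) (s.le_max' · ·)]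
    refine sum_congr rfl fun a _ => ?_
    rw [ih _ ((erase_subset _ _).trans_ssubset (erase_ssubset (s.max'_mem hs)))]

theorem det_eq_sum_over_perfect_matchings_general (n : ℕ)
    (z : Fin (2 * n) → ℂ) (hz : Function.Injective z)
    (M : Matrix (Fin (2 * n)) (Fin (2 * n)) ℂ)
    (hM : ∀ i j, M i j = if i = j then 0 else (z i - z j)⁻¹) :
    M.det =
      ∑ σ ∈ Finset.univ.filter
          (fun σ : Equiv.Perm (Fin (2 * n)) => σ * σ = 1 ∧ ∀ i, σ i ≠ i),
        ∏ i ∈ Finset.univ.filter (fun i => i < σ i), ((z i - z (σ i)) ^ 2)⁻¹ := by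
  -- `(z i - z i)⁻¹ = 0` in Lean, so the diagonal of `M` is no special case
  have hM' : (M : Fin (2 * n) → Fin (2 * n) → ℂ) = fun i j => (z i - z j)⁻¹ := by
    ext i j
    rw [hM]
    split_ifs with h <;> simp [h]
  rw [det_eq_signedDerangementSum_univ M (fun i => by simp [hM]), hM',
    signedDerangementSum_eq_matchingSum hz, matchingSum]
  refine sum_congr (filter_congr fun σ _ => ?_) fun _ _ => rfl
  rw [and_comm, eq_univ_iff_forall]
  simp only [mem_support]

/-- **Bosonization identity `Pf(M)² = det M` as a sum over perfect matchings.**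
For pairwise distinct `z₁, …, z_{2n}` and `M` the antisymmetric matrix with entries
`M_{ij} = 1/(z_i - z_j)` off the diagonal, `det M` equals the sum over all perfect
matchings of `{1, …, 2n}` (encoded as fixed-point-free involutions `σ`, each unordered
pair `{i, σ i}` contributing once via its smaller element) of the product over the
pairs of `1/(z_i - z_j)²`. -/
theorem det_eq_sum_over_perfect_matchings (n : ℕ) (hn : 1 ≤ n)
    (z : Fin (2 * n) → ℂ) (hz : Function.Injective z)
    (M : Matrix (Fin (2 * n)) (Fin (2 * n)) ℂ)
    (hM : ∀ i j, M i j = if i = j then 0 else (z i - z j)⁻¹) :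
    M.det =
      ∑ σ ∈ Finset.univ.filter
          (fun σ : Equiv.Perm (Fin (2 * n)) => σ * σ = 1 ∧ ∀ i, σ i ≠ i),
        ∏ i ∈ Finset.univ.filter (fun i => i < σ i), ((z i - z (σ i)) ^ 2)⁻¹ :=
  det_eq_sum_over_perfect_matchings_general n z hz M hM
end
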